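/- arXiv:math/9906151 — 8 statements merged into one kernel-verified Lean document; each statement's English description precedes it below -/
import Mathlib

section
/- Let (A, e) be an order-unit space with state space S(A). Let A'⁰ = {λ ∈ A' : λ(e) = 0} be the subspace of the dual of continuous functionals vanishing on e. Then the closed ball of radius 2 about 0 in A'⁰ coincides with the set {μ - ν : μ, ν ∈ S(A)}. -/
/-- A state of an order-unit space `(A, e)`: a continuous linear functional `μ`
with `μ(e) = 1 = ‖μ‖`. -/
def IsState {A : Type*} [NormedAddCommGroup A] [NormedSpace ℝ A] (e : A)
    (μ : A →L[ℝ] ℝ) : Prop :=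
  μ e = 1 ∧ ‖μ‖ = 1

namespace Stmt1Aux

variable {A : Type*} [NormedAddCommGroup A] [NormedSpace ℝ A] [PartialOrder A]

/-- The upper support functional `q a = inf {r | a ≤ r • e}`. -/
noncomputable def q (e : A) (a : A) : ℝ := sInf {r : ℝ | a ≤ r • e}

section order

variable {e : A} (he : e ≠ 0)
  (haddle : ∀ a b c : A, a ≤ b → a + c ≤ b + c)
  (hsmulle : ∀ (r : ℝ) (a : A), 0 ≤ r → 0 ≤ a → 0 ≤ r • a)
  (hunit : ∀ a : A, ∃ r : ℝ, a ≤ r • e)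
  (harch : ∀ a : A, (∀ r : ℝ, 0 < r → a ≤ r • e) → a ≤ 0)
  (hnorm : ∀ a : A, ‖a‖ = sInf {r : ℝ | 0 ≤ r ∧ -(r • e) ≤ a ∧ a ≤ r • e})

include haddle in
lemma add_le_add' {a b c d : A} (h1 : a ≤ b) (h2 : c ≤ d) : a + c ≤ b + d := by
  refine le_trans (haddle a b c h1) ?_
  have := haddle c d b h2
  rwa [add_comm c b, add_comm d b] at this

include haddle in
lemma neg_le_neg' {a b : A} (h : a ≤ b) : -b ≤ -a := by
  have h2 := haddle a b (-(a + b)) h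
  rwa [show a + -(a + b) = -b by abel, show b + -(a + b) = -a by abel] at h2

include haddle in
lemma sub_nonneg' {a b : A} (h : a ≤ b) : 0 ≤ b - a := by
  have h2 := haddle a b (-a) h
  rwa [show a + -a = (0 : A) by abel, show b + -a = b - a by abel] at h2

include haddle in
lemma le_of_sub_nonneg' {a b : A} (h : 0 ≤ b - a) : a ≤ b := by
  have h2 := haddle 0 (b - a) a h
  rwa [zero_add, show b - a + a = b by abel] at h2

include he haddle hsmulle hnorm in
lemma e_nonneg : 0 ≤ e := by
  rcases Set.eq_empty_or_nonempty {r : ℝ | 0 ≤ r ∧ -(r • e) ≤ e ∧ e ≤ r • e} with hS | hS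
  · exfalso
    have : ‖e‖ = 0 := by rw [hnorm e, hS, Real.sInf_empty]
    exact he (norm_eq_zero.mp this)
  · obtain ⟨r, hr0, hr1, -⟩ := hS
    have h1 : 0 ≤ e + r • e := by
      have := haddle (-(r • e)) e (r • e) hr1
      rwa [show -(r • e) + r • e = (0 : A) by abel] at this
    have h2 : 0 ≤ (1 + r) • e := by rwa [add_smul, one_smul]
    have h3 := hsmulle (1 + r)⁻¹ ((1 + r) • e) (by positivity) h2
    rwa [smul_smul, inv_mul_cancel₀ (by positivity), one_smul] at h3

include he haddle hsmulle in
lemma nonneg_of_smul_e (he0 : 0 ≤ e) {t : ℝ} (h : 0 ≤ t • e) : 0 ≤ t := by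
  by_contra hlt
  push_neg at hlt
  have h1 : 0 ≤ (-t) • e := hsmulle (-t) e (by linarith) he0
  rw [neg_smul] at h1
  have h1' : t • e ≤ 0 := by
    have h3 := haddle 0 (-(t • e)) (t • e) h1
    rwa [zero_add, show -(t • e) + t • e = (0:A) by abel] at h3
  have h2 : t • e = 0 := le_antisymm h1' h
  rcases smul_eq_zero.mp h2 with h | h
  · linarith
  · exact he h

include haddle hsmulle in
lemma smul_e_mono (he0 : 0 ≤ e) {r s : ℝ} (h : r ≤ s) : r • e ≤ s • e := by
  have h1 : 0 ≤ (s - r) • e := hsmulle (s - r) e (by linarith) he0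
  have h2 := haddle 0 ((s - r) • e) (r • e) h1
  rwa [zero_add, show (s - r) • e + r • e = s • e by rw [← add_smul]; ring_nf] at h2

include haddle hsmulle in
lemma smul_le_smul' {a b : A} {t : ℝ} (ht : 0 ≤ t) (h : a ≤ b) : t • a ≤ t • b := by
  have h1 : 0 ≤ t • (b - a) := hsmulle t (b - a) ht (sub_nonneg' haddle h)
  rw [smul_sub] at h1
  exact le_of_sub_nonneg' haddle h1

include he haddle hsmulle hunit in
lemma q_bddBelow (he0 : 0 ≤ e) (a : A) : BddBelow {r : ℝ | a ≤ r • e} := by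
  obtain ⟨r₀, hr₀⟩ := hunit (-a)
  refine ⟨-r₀, fun r hr => ?_⟩
  have h1 : 0 ≤ (r + r₀) • e := by
    have := add_le_add' haddle hr hr₀
    rwa [show a + -a = (0 : A) by abel, ← add_smul] at this
  have := nonneg_of_smul_e he haddle hsmulle he0 h1
  linarith

include hunit in
lemma q_nonempty (a : A) : Set.Nonempty {r : ℝ | a ≤ r • e} := hunit a

include he haddle hsmulle hunit harch in
lemma le_q_smul (he0 : 0 ≤ e) (a : A) : a ≤ q e a • e := by
  have key : ∀ ε : ℝ, 0 < ε → a - q e a • e ≤ ε • e := by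
    intro ε hε
    obtain ⟨r, hr, hrlt⟩ := Real.lt_sInf_add_pos (q_nonempty hunit a) hε
    have h1 : a ≤ (q e a + ε) • e :=
      le_trans hr (smul_e_mono haddle hsmulle he0 hrlt.le)
    have h2 := haddle a ((q e a + ε) • e) (-(q e a • e)) h1
    rwa [show a + -(q e a • e) = a - q e a • e by abel,
      show (q e a + ε) • e + -(q e a • e) = ε • e by rw [add_smul]; abel] at h2
  have h3 := harch (a - q e a • e) key
  have h4 := haddle (a - q e a • e) 0 (q e a • e) h3
  rwa [show a - q e a • e + q e a • e = a by abel, zero_add] at h4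

include he haddle hsmulle hunit harch in
lemma q_le_iff (he0 : 0 ≤ e) {a : A} {r : ℝ} : q e a ≤ r ↔ a ≤ r • e := by
  constructor
  · intro h
    exact le_trans (le_q_smul he haddle hsmulle hunit harch he0 a)
      (smul_e_mono haddle hsmulle he0 h)
  · intro h
    exact csInf_le (q_bddBelow he haddle hsmulle hunit he0 a) h

include he haddle hsmulle hunit harch in
lemma q_add_le (he0 : 0 ≤ e) (a b : A) : q e (a + b) ≤ q e a + q e b := by
  rw [q_le_iff he haddle hsmulle hunit harch he0, add_smul]
  exact add_le_add' haddle (le_q_smul he haddle hsmulle hunit harch he0 a)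
    (le_q_smul he haddle hsmulle hunit harch he0 b)

include he haddle hsmulle hunit harch in
lemma q_add_smul_e (he0 : 0 ≤ e) (a : A) (t : ℝ) : q e (a + t • e) = q e a + t := by
  apply le_antisymm
  · rw [q_le_iff he haddle hsmulle hunit harch he0, add_smul]
    exact add_le_add' haddle (le_q_smul he haddle hsmulle hunit harch he0 a) le_rfl
  · have h1 : a ≤ (q e (a + t • e) - t) • e := by
      have h2 := haddle (a + t • e) (q e (a + t • e) • e) (-(t • e))
        (le_q_smul he haddle hsmulle hunit harch he0 (a + t • e))
      rw [show a + t • e + -(t • e) = a by abel] at h2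
      rw [sub_smul, sub_eq_add_neg]
      exact h2
    have := (q_le_iff he haddle hsmulle hunit harch he0).mpr h1
    linarith

include he haddle hsmulle hunit harch in
lemma q_zero (he0 : 0 ≤ e) : q e (0 : A) = 0 := by
  apply le_antisymm
  · rw [q_le_iff he haddle hsmulle hunit harch he0, zero_smul]
  · exact nonneg_of_smul_e he haddle hsmulle he0
      (le_q_smul he haddle hsmulle hunit harch he0 (0 : A))

include he haddle hsmulle hunit harch in
lemma q_e (he0 : 0 ≤ e) : q e e = 1 := by
  have := q_add_smul_e he haddle hsmulle hunit harch he0 0 1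
  rw [zero_add, one_smul, q_zero he haddle hsmulle hunit harch he0, zero_add] at this
  exact this

include he haddle hsmulle hunit harch in
lemma q_neg_e (he0 : 0 ≤ e) : q e (-e) = -1 := by
  have := q_add_smul_e he haddle hsmulle hunit harch he0 0 (-1)
  rw [zero_add, neg_one_smul, q_zero he haddle hsmulle hunit harch he0, zero_add] at this
  exact this

include he haddle hsmulle hunit harch in
lemma q_add_q_neg_nonneg (he0 : 0 ≤ e) (a : A) : 0 ≤ q e a + q e (-a) := by
  have h1 := q_add_le he haddle hsmulle hunit harch he0 a (-a)
  rw [add_neg_cancel, q_zero he haddle hsmulle hunit harch he0] at h1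
  linarith

include he haddle hsmulle hunit harch hnorm in
lemma norm_eq_max (he0 : 0 ≤ e) (a : A) : ‖a‖ = max (q e a) (q e (-a)) := by
  rw [hnorm a]
  have hmax : 0 ≤ max (q e a) (q e (-a)) := by
    have := q_add_q_neg_nonneg he haddle hsmulle hunit harch he0 a
    rcases le_total (q e a) (q e (-a)) with h | h
    · rw [max_eq_right h]; linarith
    · rw [max_eq_left h]; linarith
  have hset : {r : ℝ | 0 ≤ r ∧ -(r • e) ≤ a ∧ a ≤ r • e} =
      Set.Ici (max (q e a) (q e (-a))) := by
    ext r
    simp only [Set.mem_setOf_eq, Set.mem_Ici, max_le_iff]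
    constructor
    · rintro ⟨hr0, hr1, hr2⟩
      refine ⟨(q_le_iff he haddle hsmulle hunit harch he0).mpr hr2, ?_⟩
      rw [q_le_iff he haddle hsmulle hunit harch he0]
      have := neg_le_neg' haddle hr1
      rwa [neg_neg] at this
    · rintro ⟨h1, h2⟩
      refine ⟨le_trans hmax (max_le_iff.mpr ⟨h1, h2⟩), ?_,
        (q_le_iff he haddle hsmulle hunit harch he0).mp h1⟩
      have := neg_le_neg' haddle ((q_le_iff he haddle hsmulle hunit harch he0).mp h2)
      rwa [neg_neg] at this
  rw [hset, csInf_Ici]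

include he haddle hsmulle hunit harch hnorm in
lemma q_le_norm (he0 : 0 ≤ e) (a : A) : q e a ≤ ‖a‖ := by
  rw [norm_eq_max he haddle hsmulle hunit harch hnorm he0 a]
  exact le_max_left _ _

include he haddle hsmulle hunit harch hnorm in
lemma norm_e_eq_one (he0 : 0 ≤ e) : ‖e‖ = 1 := by
  rw [norm_eq_max he haddle hsmulle hunit harch hnorm he0 e,
    q_e he haddle hsmulle hunit harch he0, q_neg_e he haddle hsmulle hunit harch he0]
  norm_num

include he haddle hsmulle hunit harch hnorm in
/-- The key inequality: if `lam e = 0` and `‖lam‖ ≤ 2` then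
`lam c ≥ -(q c + q (-c))`. -/
lemma key_lower (he0 : 0 ≤ e) (lam : A →L[ℝ] ℝ) (hle : lam e = 0) (hln : ‖lam‖ ≤ 2)
    (c : A) : -(q e c + q e (-c)) ≤ lam c := by
  set s : ℝ := (q e c - q e (-c)) / 2 with hs
  set m : ℝ := (q e c + q e (-c)) / 2 with hm
  have hm0 : 0 ≤ m := by
    have := q_add_q_neg_nonneg he haddle hsmulle hunit harch he0 c
    rw [hm]; linarith
  set d : A := c + (-s) • e with hd
  have hqd : q e d = m := by
    rw [hd, q_add_smul_e he haddle hsmulle hunit harch he0]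
    rw [hs, hm]; ring
  have hqnd : q e (-d) = m := by
    have : -d = -c + s • e := by rw [hd]; module
    rw [this, q_add_smul_e he haddle hsmulle hunit harch he0]
    rw [hs, hm]; ring
  have hnd : ‖d‖ = m := by
    rw [norm_eq_max he haddle hsmulle hunit harch hnorm he0 d, hqd, hqnd, max_self]
  have hld : lam d = lam c := by
    rw [hd]
    simp [hle]
  have habs : |lam d| ≤ 2 * m := by
    calc |lam d| = ‖lam d‖ := rfl
      _ ≤ ‖lam‖ * ‖d‖ := lam.le_opNorm d
      _ ≤ 2 * m := by rw [hnd]; exact mul_le_mul_of_nonneg_right hln hm0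
  have := neg_abs_le (lam d)
  rw [hld] at this habs
  have : -(2 * m) ≤ lam c := by
    have h2 := neg_le_neg habs
    calc -(2*m) ≤ -|lam c| := h2
      _ ≤ lam c := neg_abs_le _
  rw [hm] at this
  linarith

end order

end Stmt1Aux

open Stmt1Aux in
/-- The closed ball of radius 2 about 0 in
`A'⁰ = {λ ∈ A' : λ(e) = 0}` coincides with `{μ - ν : μ, ν ∈ S(A)}`. -/
theorem stmt_1 {A : Type*} [NormedAddCommGroup A] [NormedSpace ℝ A] [PartialOrder A]
    (e : A) (he : e ≠ 0)
    (haddle : ∀ a b c : A, a ≤ b → a + c ≤ b + c)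
    (hsmulle : ∀ (r : ℝ) (a : A), 0 ≤ r → 0 ≤ a → 0 ≤ r • a)
    (hunit : ∀ a : A, ∃ r : ℝ, a ≤ r • e)
    (harch : ∀ a : A, (∀ r : ℝ, 0 < r → a ≤ r • e) → a ≤ 0)
    (hnorm : ∀ a : A, ‖a‖ = sInf {r : ℝ | 0 ≤ r ∧ -(r • e) ≤ a ∧ a ≤ r • e}) :
    {lam : A →L[ℝ] ℝ | lam e = 0 ∧ ‖lam‖ ≤ 2} =
      {lam : A →L[ℝ] ℝ | ∃ μ ν : A →L[ℝ] ℝ, IsState e μ ∧ IsState e ν ∧ lam = μ - ν} := by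
  have he0 : 0 ≤ e := e_nonneg he haddle hsmulle hnorm
  have hqle : ∀ {a : A} {r : ℝ}, q e a ≤ r ↔ a ≤ r • e :=
    fun {a r} => q_le_iff he haddle hsmulle hunit harch he0
  have hqadd : ∀ a b : A, q e (a + b) ≤ q e a + q e b :=
    q_add_le he haddle hsmulle hunit harch he0
  have hq0 : q e (0 : A) = 0 := q_zero he haddle hsmulle hunit harch he0
  have hqe : q e e = 1 := q_e he haddle hsmulle hunit harch he0
  have hqne : q e (-e) = -1 := q_neg_e he haddle hsmulle hunit harch he0
  have hqnorm : ∀ a : A, q e a ≤ ‖a‖ := q_le_norm he haddle hsmulle hunit harch hnorm he0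
  have hne1 : ‖e‖ = 1 := norm_e_eq_one he haddle hsmulle hunit harch hnorm he0
  ext lam
  simp only [Set.mem_setOf_eq]
  constructor
  · rintro ⟨hle, hln⟩
    -- key lower bound
    have hkey : ∀ c : A, -(q e c + q e (-c)) ≤ lam c :=
      key_lower he haddle hsmulle hunit harch hnorm he0 lam hle hln
    -- the sublinear functional p
    set S : A → Set ℝ := fun a => {x : ℝ | ∃ c : A, x = q e (a - c) + (lam c + q e c)} with hS
    set p : A → ℝ := fun a => sInf (S a) with hp
    have hSne : ∀ a, (S a).Nonempty := fun a => ⟨q e (a - 0) + (lam 0 + q e 0), 0, rfl⟩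
    have hSlb : ∀ a, ∀ x ∈ S a, -(q e (-a)) ≤ x := by
      rintro a x ⟨c, rfl⟩
      have h1 : q e (-c) ≤ q e (a - c) + q e (-a) := by
        have := hqadd (a - c) (-a)
        rwa [show a - c + -a = -c by abel] at this
      have h2 := hkey c
      linarith
    have hSbdd : ∀ a, BddBelow (S a) := fun a => ⟨-(q e (-a)), hSlb a⟩
    have hplb : ∀ a, -(q e (-a)) ≤ p a := fun a => le_csInf (hSne a) (hSlb a)
    have hple : ∀ (a c : A), p a ≤ q e (a - c) + (lam c + q e c) :=
      fun a c => csInf_le (hSbdd a) ⟨c, rfl⟩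
    have hpq : ∀ a, p a ≤ q e a := by
      intro a
      have := hple a 0
      simpa [hq0] using this
    have hplam : ∀ a, p a ≤ lam a + q e a := by
      intro a
      have := hple a a
      simpa [hq0] using this
    -- subadditivity
    have hpadd : ∀ a b : A, p (a + b) ≤ p a + p b := by
      intro a b
      refine le_of_forall_pos_le_add ?_
      intro ε hε
      obtain ⟨x, ⟨c, rfl⟩, hx⟩ := Real.lt_sInf_add_pos (hSne a) (half_pos hε)
      obtain ⟨y, ⟨d, rfl⟩, hy⟩ := Real.lt_sInf_add_pos (hSne b) (half_pos hε)
      have h1 : p (a + b) ≤ q e (a + b - (c + d)) + (lam (c + d) + q e (c + d)) :=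
        hple (a + b) (c + d)
      have h2 : q e (a + b - (c + d)) ≤ q e (a - c) + q e (b - d) := by
        have := hqadd (a - c) (b - d)
        rwa [show a - c + (b - d) = a + b - (c + d) by abel] at this
      have h3 : q e (c + d) ≤ q e c + q e d := hqadd c d
      have h4 : lam (c + d) = lam c + lam d := map_add _ _ _
      have := hx
      have := hy
      simp only [← hp] at *
      linarith
    -- positive homogeneity
    have hsmul_smul : ∀ (t : ℝ) (a : A), 0 < t → q e (t • a) = t * q e a := by
      intro t a ht
      apply le_antisymm
      · rw [hqle, show (t * q e a) • e = t • (q e a • e) by rw [smul_smul]]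
        exact smul_le_smul' haddle hsmulle ht.le
          (le_q_smul he haddle hsmulle hunit harch he0 a)
      · have h1 : q e a ≤ t⁻¹ * q e (t • a) := by
          rw [hqle, show (t⁻¹ * q e (t • a)) • e = t⁻¹ • (q e (t • a) • e) by rw [smul_smul]]
        -- a = t⁻¹ • (t • a) ≤ t⁻¹ • (q (t•a) • e)
          have h2 := smul_le_smul' haddle hsmulle (inv_nonneg.mpr ht.le)
            (le_q_smul he haddle hsmulle hunit harch he0 (t • a))
          rwa [smul_smul, inv_mul_cancel₀ ht.ne', one_smul] at h2
        have h3 := mul_le_mul_of_nonneg_left h1 ht.le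
        rwa [← mul_assoc, mul_inv_cancel₀ ht.ne', one_mul] at h3
    have hphom_le : ∀ (t : ℝ) (a : A), 0 < t → p (t • a) ≤ t * p a := by
      intro t a ht
      refine le_of_forall_pos_le_add ?_
      intro ε hε
      obtain ⟨x, ⟨c, rfl⟩, hx⟩ := Real.lt_sInf_add_pos (hSne a) (div_pos hε ht)
      have h1 : p (t • a) ≤ q e (t • a - t • c) + (lam (t • c) + q e (t • c)) :=
        hple (t • a) (t • c)
      have h2 : q e (t • a - t • c) = t * q e (a - c) := by
        rw [← smul_sub]; exact hsmul_smul t (a - c) ht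
      have h3 : q e (t • c) = t * q e c := hsmul_smul t c ht
      have h4 : lam (t • c) = t * lam c := by simp
      rw [h2, h3, h4] at h1
      have h5 : q e (a - c) + (lam c + q e c) < p a + ε / t := hx
      calc p (t • a) ≤ t * (q e (a - c) + (lam c + q e c)) := by rw [mul_add, mul_add]; linarith [h1]
        _ ≤ t * (p a + ε / t) := by
            exact mul_le_mul_of_nonneg_left h5.le ht.le
        _ = t * p a + ε := by field_simp
    have hphom : ∀ (t : ℝ), 0 < t → ∀ (a : A), p (t • a) = t * p a := by
      intro t ht a
      apply le_antisymm (hphom_le t a ht)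
      have h1 := hphom_le t⁻¹ (t • a) (inv_pos.mpr ht)
      rw [smul_smul, inv_mul_cancel₀ ht.ne', one_smul] at h1
      have h2 := mul_le_mul_of_nonneg_left h1 ht.le
      rwa [← mul_assoc, mul_inv_cancel₀ ht.ne', one_mul] at h2
    have hp0 : 0 ≤ p 0 := by simpa [hq0] using hplb 0
    -- Hahn-Banach extension
    obtain ⟨g, -, hg⟩ := exists_extension_of_le_sublinear
      ⟨(⊥ : Submodule ℝ A), 0⟩ p hphom hpadd
      (by rintro ⟨x, hx⟩
          rw [Submodule.mem_bot] at hx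
          subst hx
          simpa using hp0)
    have hgq : ∀ a, g a ≤ q e a := fun a => le_trans (hg a) (hpq a)
    have hglam : ∀ a, g a ≤ lam a + q e a := fun a => le_trans (hg a) (hplam a)
    have hgbound : ∀ a, ‖g a‖ ≤ 1 * ‖a‖ := by
      intro a
      rw [one_mul, Real.norm_eq_abs, abs_le]
      constructor
      · have := le_trans (hgq (-a)) (hqnorm (-a))
        rw [map_neg, norm_neg] at this
        linarith
      · exact le_trans (hgq a) (hqnorm a)
    set μ : A →L[ℝ] ℝ := g.mkContinuous 1 hgbound with hμ
    have hμa : ∀ a, μ a = g a := fun a => rfl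
    have hge : g e = 1 := by
      have h1 : g e ≤ 1 := by simpa [hqe] using hgq e
      have h2 : g (-e) ≤ -1 := by simpa [hqne] using hgq (-e)
      rw [map_neg] at h2
      linarith
    have hμnorm_le : ‖μ‖ ≤ 1 := g.mkContinuous_norm_le zero_le_one hgbound
    have hμnorm : ‖μ‖ = 1 := by
      apply le_antisymm hμnorm_le
      have h1 : (1:ℝ) = ‖μ e‖ := by rw [hμa, hge]; norm_num
      calc (1:ℝ) = ‖μ e‖ := h1
        _ ≤ ‖μ‖ * ‖e‖ := μ.le_opNorm e
        _ = ‖μ‖ := by rw [hne1, mul_one]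
    set ν : A →L[ℝ] ℝ := μ - lam with hν
    have hνa : ∀ a, ν a = g a - lam a := fun a => rfl
    have hνe : ν e = 1 := by rw [hνa, hge, hle, sub_zero]
    have hνbound : ∀ a, ‖ν a‖ ≤ 1 * ‖a‖ := by
      intro a
      rw [one_mul, Real.norm_eq_abs, abs_le, hνa]
      constructor
      · have h1 := hglam (-a)
        have h2 := hqnorm (-a)
        rw [map_neg, map_neg, norm_neg] at *
        linarith
      · have h1 := hglam a
        have h2 := hqnorm a
        linarith
    have hνnorm : ‖ν‖ = 1 := by
      apply le_antisymm (ν.opNorm_le_bound zero_le_one hνbound)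
      have h1 : (1:ℝ) = ‖ν e‖ := by rw [hνe]; norm_num
      calc (1:ℝ) = ‖ν e‖ := h1
        _ ≤ ‖ν‖ * ‖e‖ := ν.le_opNorm e
        _ = ‖ν‖ := by rw [hne1, mul_one]
    refine ⟨μ, ν, ⟨by rw [hμa, hge], hμnorm⟩, ⟨hνe, hνnorm⟩, ?_⟩
    rw [hν]
    abel
  · rintro ⟨μ, ν, ⟨hμe, hμn⟩, ⟨hνe, hνn⟩, rfl⟩
    constructor
    · simp [hμe, hνe]
    · calc ‖μ - ν‖ ≤ ‖μ‖ + ‖ν‖ := norm_sub_le _ _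
        _ = 2 := by rw [hμn, hνn]; norm_num
end

section
/- Let L be a seminorm on an order-unit space (A, e) whose null space is exactly ℝe, and define the metric ρ_L on S(A) by ρ_L(μ,ν) = sup{|μ(a) - ν(a)| : L(a) ≤ 1}. Then for r ≥ 0 the following are equivalent: (1) ρ_L(μ,ν) ≤ 2r for all μ, ν ∈ S(A); (2) ‖ã‖~ ≤ r·L~(ã) for all a ∈ A, where ‖·‖~ and L~ are the quotient seminorms on A/(ℝe). -/
/-!
Write `p(a) = inf {t : a ≤ t e}`; in `C(X)` with `e = 1` this is `max a`. It is sublinear,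
`p(a + s e) = p(a) + s`, and the order-unit norm is `‖a‖ = max (p a) (p (-a))`. Hence the
coset `a + ℝe` contains an element of norm `(p(a) + p(-a))/2`, half the oscillation of `a`.
Hahn–Banach, with `p` as dominating functional, yields states `μ, ν` with `μ a = p(a)` and
`ν a = -p(-a)`; since states fix `e`, the oscillation equals `μ(b) - ν(b)` for every
`b ∈ a + ℝe`, and a bound `ρ_L(μ, ν) ≤ 2r` gives `μ(b) - ν(b) ≤ 2r L(b)` after rescaling `b`
to `L(b) = 1`. Conversely, states have norm one, so
`|μ a - ν a| = |μ(a + s e) - ν(a + s e)| ≤ 2‖a + s e‖`.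
-/

open scoped ENNReal

/-- The metric `ρ_L` on the state space determined by a Lipschitz seminorm `L`:
`ρ_L(μ,ν) = sup {|μ(a) - ν(a)| : L(a) ≤ 1}`, possibly `+∞`. -/
noncomputable def rhoL {A : Type*} [NormedAddCommGroup A] [NormedSpace ℝ A]
    (L : A → ℝ) (μ ν : A →L[ℝ] ℝ) : ℝ≥0∞ :=
  ⨆ (a : A) (_ : L a ≤ 1), ENNReal.ofReal |μ a - ν a|

theorem exists_linearMap_le_apply_eq {E : Type*} [AddCommGroup E] [Module ℝ E] {N : E → ℝ}
    (hN_smul : ∀ c : ℝ, 0 < c → ∀ x, N (c • x) = c * N x)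
    (hN_add : ∀ x y, N (x + y) ≤ N x + N y)
    (x : E) {y : ℝ} (hy : -N (-x) ≤ y ∧ y ≤ N x) :
    ∃ g : E →ₗ[ℝ] ℝ, (∀ z, g z ≤ N z) ∧ g x = y := by
  have hN_zero : N 0 = 0 := by
    have := hN_smul 2 two_pos 0
    rw [smul_zero] at this
    linarith
  have hx : ∀ c : ℝ, c • x = 0 → c • y = 0 := by
    intro c hc
    rcases eq_or_ne c 0 with rfl | hc0
    · exact zero_smul _ _
    · obtain rfl := (smul_eq_zero.mp hc).resolve_left hc0
      have : y = 0 := by rw [neg_zero, hN_zero] at hy; linarith [hy.1, hy.2]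
      rw [this, smul_zero]
  let f := LinearPMap.mkSpanSingleton' (σ := RingHom.id ℝ) x y hx
  have hf : ∀ z : f.domain, f z ≤ N z := by
    rintro ⟨z, hz⟩
    obtain ⟨c, rfl⟩ := Submodule.mem_span_singleton.mp hz
    rw [LinearPMap.mkSpanSingleton'_apply, RingHom.id_apply, smul_eq_mul]
    change c * y ≤ N (c • x)
    rcases lt_trichotomy c 0 with hc | rfl | hc
    · rw [← neg_smul_neg, hN_smul (-c) (neg_pos.mpr hc)]
      linarith [mul_le_mul_of_nonpos_left hy.1 hc.le]
    · simp [hN_zero]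
    · rw [hN_smul c hc]
      exact mul_le_mul_of_nonneg_left hy.2 hc.le
  obtain ⟨g, hgf, hgN⟩ := exists_extension_of_le_sublinear f N hN_smul hN_add hf
  exact ⟨g, hgN, (hgf ⟨x, Submodule.mem_span_singleton_self x⟩).trans
    (LinearPMap.mkSpanSingleton'_apply_self _ _ _ _)⟩

section OrderUnit

variable {A : Type*} [AddCommGroup A] [Module ℝ A] [PartialOrder A]

structure IsArchimedeanOrderUnit (e : A) : Prop where
  pos : 0 < e
  exists_le_smul : ∀ a : A, ∃ r : ℝ, a ≤ r • e
  nonpos_of_forall_le_smul : ∀ a : A, (∀ r : ℝ, 0 < r → a ≤ r • e) → a ≤ 0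

noncomputable def orderUnitSup (e a : A) : ℝ := sInf {t : ℝ | a ≤ t • e}

variable [IsOrderedAddMonoid A] [PosSMulMono ℝ A]

namespace IsArchimedeanOrderUnit

variable {e : A} (hu : IsArchimedeanOrderUnit e)
include hu

theorem smul_le_smul_iff {s t : ℝ} : s • e ≤ t • e ↔ s ≤ t :=
  have := PosSMulMono.toPosSMulStrictMono (α := ℝ) (β := A)
  smul_le_smul_iff_of_pos_right hu.pos

theorem bddBelow_setOf_le_smul (a : A) : BddBelow {t : ℝ | a ≤ t • e} := by
  obtain ⟨s, hs⟩ := hu.exists_le_smul (-a)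
  refine ⟨-s, fun t ht => ?_⟩
  have : (-s) • e ≤ t • e := by rw [neg_smul]; exact (neg_le.mp hs).trans ht
  exact hu.smul_le_smul_iff.mp this

theorem le_orderUnitSup_smul (a : A) : a ≤ orderUnitSup e a • e := by
  have hne : {t : ℝ | a ≤ t • e}.Nonempty := hu.exists_le_smul a
  rw [← sub_nonpos]
  refine hu.nonpos_of_forall_le_smul _ fun ε hε => ?_
  obtain ⟨t, hat, ht⟩ := exists_lt_of_csInf_lt hne (lt_add_of_pos_right (orderUnitSup e a) hε)
  rw [sub_le_iff_le_add, ← add_smul, add_comm ε]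
  exact hat.trans (hu.smul_le_smul_iff.mpr ht.le)

theorem orderUnitSup_le_iff {a : A} {t : ℝ} : orderUnitSup e a ≤ t ↔ a ≤ t • e :=
  ⟨fun h => (hu.le_orderUnitSup_smul a).trans (hu.smul_le_smul_iff.mpr h),
    fun h => csInf_le (hu.bddBelow_setOf_le_smul a) h⟩

theorem orderUnitSup_add_le (a b : A) :
    orderUnitSup e (a + b) ≤ orderUnitSup e a + orderUnitSup e b := by
  rw [hu.orderUnitSup_le_iff, add_smul]
  exact add_le_add (hu.le_orderUnitSup_smul a) (hu.le_orderUnitSup_smul b)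

theorem orderUnitSup_smul {c : ℝ} (hc : 0 < c) (a : A) :
    orderUnitSup e (c • a) = c * orderUnitSup e a := by
  refine eq_of_forall_ge_iff fun t => ?_
  rw [hu.orderUnitSup_le_iff, ← le_div_iff₀' hc, hu.orderUnitSup_le_iff]
  conv_rhs => rw [← smul_le_smul_iff_of_pos_left hc, smul_smul, mul_div_cancel₀ t hc.ne']

theorem orderUnitSup_add_smul_self (a : A) (s : ℝ) :
    orderUnitSup e (a + s • e) = orderUnitSup e a + s := by
  refine eq_of_forall_ge_iff fun t => ?_
  rw [hu.orderUnitSup_le_iff, ← le_sub_iff_add_le, ← sub_smul, ← hu.orderUnitSup_le_iff,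
    le_sub_iff_add_le]

theorem orderUnitSup_smul_self (t : ℝ) : orderUnitSup e (t • e) = t :=
  eq_of_forall_ge_iff fun _ => by rw [hu.orderUnitSup_le_iff, hu.smul_le_smul_iff]

theorem neg_orderUnitSup_neg_le (a : A) : -orderUnitSup e (-a) ≤ orderUnitSup e a := by
  have := hu.orderUnitSup_add_le a (-a)
  rw [add_neg_cancel, ← zero_smul ℝ e, hu.orderUnitSup_smul_self] at this
  linarith

theorem sInf_orderUnitNorm_eq (a : A) :
    sInf {r : ℝ | 0 ≤ r ∧ -(r • e) ≤ a ∧ a ≤ r • e} =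
      max (orderUnitSup e a) (orderUnitSup e (-a)) := by
  have hmax : 0 ≤ max (orderUnitSup e a) (orderUnitSup e (-a)) := by
    have := hu.neg_orderUnitSup_neg_le a
    rcases le_total 0 (orderUnitSup e a) with h | h
    · exact le_max_of_le_left h
    · exact le_max_of_le_right (by linarith)
  refine (congrArg sInf (Set.ext fun r => ?_)).trans csInf_Ici
  simp only [Set.mem_ofPred_eq, Set.mem_Ici, max_le_iff, neg_le, ← hu.orderUnitSup_le_iff]
  exact ⟨fun h => ⟨h.2.2, h.2.1⟩, fun h => ⟨hmax.trans (max_le h.1 h.2), h.2, h.1⟩⟩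

end IsArchimedeanOrderUnit

end OrderUnit

section Coset

variable {A : Type*} [AddCommGroup A] [Module ℝ A]

/-- The quotient seminorm `F~(ã)` on `A/(ℝe)` induced by `F`. -/
noncomputable def cosetInf (F : A → ℝ) (e a : A) : ℝ :=
  sInf {c : ℝ | ∃ s : ℝ, c = F (a + s • e)}

variable {F : A → ℝ} {e a : A}

theorem cosetInf_le (hF : ∀ x, 0 ≤ F x) (s : ℝ) : cosetInf F e a ≤ F (a + s • e) :=
  csInf_le ⟨0, by rintro _ ⟨s, rfl⟩; exact hF _⟩ ⟨s, rfl⟩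

theorem le_cosetInf {y : ℝ} (h : ∀ s : ℝ, y ≤ F (a + s • e)) : y ≤ cosetInf F e a :=
  le_csInf ⟨_, 0, rfl⟩ (by rintro _ ⟨s, rfl⟩; exact h s)

theorem le_mul_cosetInf {y r : ℝ} (hr : 0 ≤ r) (h : ∀ s : ℝ, y ≤ r * F (a + s • e)) :
    y ≤ r * cosetInf F e a := by
  rcases hr.eq_or_lt with rfl | hr
  · simpa using h 0
  · rw [← div_le_iff₀' hr]
    exact le_cosetInf fun s => (div_le_iff₀' hr).mpr (h s)

end Coset

section States

variable {A : Type*} [NormedAddCommGroup A] [NormedSpace ℝ A] {e : A} {μ ν : A →L[ℝ] ℝ}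

theorem IsState.apply_add_smul (hμ : IsState e μ) (a : A) (s : ℝ) :
    μ (a + s • e) = μ a + s := by
  rw [map_add, map_smul, hμ.1, smul_eq_mul, mul_one]

theorem IsState.abs_apply_le (hμ : IsState e μ) (a : A) : |μ a| ≤ ‖a‖ := by
  simpa [hμ.2] using μ.le_opNorm a

theorem abs_sub_le_two_mul_cosetInf_norm (hμ : IsState e μ) (hν : IsState e ν) (a : A) :
    |μ a - ν a| ≤ 2 * cosetInf (‖·‖) e a := by
  rw [← div_le_iff₀' two_pos]
  refine le_cosetInf fun s => ?_
  rw [div_le_iff₀' two_pos]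
  calc |μ a - ν a| = |μ (a + s • e) - ν (a + s • e)| := by
        rw [hμ.apply_add_smul, hν.apply_add_smul, add_sub_add_right_eq_sub]
    _ ≤ |μ (a + s • e)| + |ν (a + s • e)| := abs_sub _ _
    _ ≤ 2 * ‖a + s • e‖ := by
        linarith [hμ.abs_apply_le (a + s • e), hν.abs_apply_le (a + s • e)]

theorem ofReal_abs_sub_le_rhoL {L : A → ℝ} {a : A} (ha : L a ≤ 1) :
    ENNReal.ofReal |μ a - ν a| ≤ rhoL L μ ν :=
  le_iSup₂ (f := fun (x : A) (_ : L x ≤ 1) => ENNReal.ofReal |μ x - ν x|) a ha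

theorem abs_sub_le_mul_of_rhoL_le {L : A → ℝ} (hL0 : ∀ a, 0 ≤ L a)
    (hLsmul : ∀ (t : ℝ) (a : A), L (t • a) = |t| * L a)
    (hLnull : ∀ a : A, L a = 0 → ∃ t : ℝ, a = t • e)
    (hμ : IsState e μ) (hν : IsState e ν) {K : ℝ} (hK : 0 ≤ K)
    (h : rhoL L μ ν ≤ ENNReal.ofReal K) (b : A) : |μ b - ν b| ≤ K * L b := by
  rcases (hL0 b).eq_or_lt with hb | hb
  · obtain ⟨t, rfl⟩ := hLnull b hb.symm
    simp [hμ.1, hν.1, ← hb]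
  · have hb' : L ((L b)⁻¹ • b) ≤ 1 := by
      rw [hLsmul, abs_of_pos (inv_pos.mpr hb), inv_mul_cancel₀ hb.ne']
    have hK' := (ENNReal.ofReal_le_ofReal_iff hK).mp ((ofReal_abs_sub_le_rhoL hb').trans h)
    rw [map_smul, map_smul, smul_eq_mul, smul_eq_mul, ← mul_sub, abs_mul,
      abs_of_pos (inv_pos.mpr hb), inv_mul_le_iff₀ hb] at hK'
    linarith

end States

section OrderUnitSpace

variable {A : Type*} [NormedAddCommGroup A] [NormedSpace ℝ A] [PartialOrder A]
  [IsOrderedAddMonoid A] [PosSMulMono ℝ A] {e : A}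

theorem pos_of_norm_eq_sInf (he : e ≠ 0)
    (hnorm : ‖e‖ = sInf {r : ℝ | 0 ≤ r ∧ -(r • e) ≤ e ∧ e ≤ r • e}) : 0 < e := by
  obtain ⟨ρ, hρ, hρe, -⟩ : {r : ℝ | 0 ≤ r ∧ -(r • e) ≤ e ∧ e ≤ r • e}.Nonempty :=
    Set.nonempty_iff_ne_empty.mpr fun hempty => by
      rw [hempty, Real.sInf_empty, norm_eq_zero] at hnorm
      exact he hnorm
  have : 0 ≤ (ρ + 1) • e := by
    rw [add_smul, one_smul, ← neg_le_iff_add_nonneg]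
    exact neg_le.mp hρe
  exact (nonneg_of_smul_nonneg_of_pos_left this (by linarith)).lt_of_ne' he

namespace IsArchimedeanOrderUnit

variable (hu : IsArchimedeanOrderUnit e)
  (hnorm : ∀ a : A, ‖a‖ = max (orderUnitSup e a) (orderUnitSup e (-a)))
include hu hnorm

theorem cosetInf_norm_le (a : A) :
    cosetInf (‖·‖) e a ≤ (orderUnitSup e a + orderUnitSup e (-a)) / 2 := by
  refine (cosetInf_le (fun _ => norm_nonneg _)
    ((orderUnitSup e (-a) - orderUnitSup e a) / 2)).trans_eq ?_
  rw [hnorm, neg_add, ← neg_smul, hu.orderUnitSup_add_smul_self, hu.orderUnitSup_add_smul_self]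
  exact (max_eq_left (by linarith)).trans (by ring)

theorem exists_isState_apply_eq (a : A) {y : ℝ}
    (hy : -orderUnitSup e (-a) ≤ y ∧ y ≤ orderUnitSup e a) :
    ∃ μ : A →L[ℝ] ℝ, IsState e μ ∧ μ a = y := by
  obtain ⟨g, hgp, hga⟩ :=
    exists_linearMap_le_apply_eq (fun _ hc => hu.orderUnitSup_smul hc) hu.orderUnitSup_add_le a hy
  have hg : ∀ z, ‖g z‖ ≤ 1 * ‖z‖ := fun z => by
    have := hgp (-z)
    rw [map_neg] at this
    rw [one_mul, hnorm, Real.norm_eq_abs, abs_le]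
    exact ⟨by linarith [le_max_right (orderUnitSup e z) (orderUnitSup e (-z))],
      (hgp z).trans (le_max_left _ _)⟩
  have hpe : orderUnitSup e e = 1 := by simpa using hu.orderUnitSup_smul_self 1
  have hpe' : orderUnitSup e (-e) = -1 := by simpa using hu.orderUnitSup_smul_self (-1)
  have hge : g e = 1 := by linarith [hgp e, map_neg g e ▸ hgp (-e)]
  have hnorm_e : ‖e‖ = 1 := by rw [hnorm, hpe, hpe']; norm_num
  refine ⟨g.mkContinuous 1 hg,
    ⟨hge, le_antisymm (g.mkContinuous_norm_le zero_le_one hg) ?_⟩, hga⟩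
  simpa [hge, hnorm_e] using (g.mkContinuous 1 hg).le_opNorm e

theorem orderUnitSup_add_orderUnitSup_neg_le {L : A → ℝ} (hL0 : ∀ a, 0 ≤ L a)
    (hLsmul : ∀ (t : ℝ) (a : A), L (t • a) = |t| * L a)
    (hLnull : ∀ a : A, L a = 0 → ∃ t : ℝ, a = t • e) {K : ℝ} (hK : 0 ≤ K)
    (hρ : ∀ μ ν : A →L[ℝ] ℝ, IsState e μ → IsState e ν →
      rhoL L μ ν ≤ ENNReal.ofReal K)
    (a : A) (s : ℝ) : orderUnitSup e a + orderUnitSup e (-a) ≤ K * L (a + s • e) := by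
  obtain ⟨μ, hμ, hμa⟩ := hu.exists_isState_apply_eq hnorm a
    ⟨hu.neg_orderUnitSup_neg_le a, le_rfl⟩
  obtain ⟨ν, hν, hνa⟩ := hu.exists_isState_apply_eq hnorm a
    ⟨le_rfl, hu.neg_orderUnitSup_neg_le a⟩
  have := abs_sub_le_mul_of_rhoL_le hL0 hLsmul hLnull hμ hν hK (hρ μ ν hμ hν) (a + s • e)
  rw [hμ.apply_add_smul, hν.apply_add_smul, hμa, hνa] at this
  calc _ = orderUnitSup e a + s - (-orderUnitSup e (-a) + s) := by ring
    _ ≤ _ := (le_abs_self _).trans this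

end IsArchimedeanOrderUnit

end OrderUnitSpace

/-- For `r ≥ 0`: `ρ_L(μ,ν) ≤ 2r` for all states `μ, ν` iff
`‖ã‖~ ≤ r·L~(ã)` for all `a ∈ A`, where `‖·‖~` and `L~` are the quotient
seminorms on `A/(ℝe)`. -/
theorem stmt_2 {A : Type*} [NormedAddCommGroup A] [NormedSpace ℝ A] [PartialOrder A]
    (e : A) (he : e ≠ 0)
    (haddle : ∀ a b c : A, a ≤ b → a + c ≤ b + c)
    (hsmulle : ∀ (r : ℝ) (a : A), 0 ≤ r → 0 ≤ a → 0 ≤ r • a)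
    (hunit : ∀ a : A, ∃ r : ℝ, a ≤ r • e)
    (harch : ∀ a : A, (∀ r : ℝ, 0 < r → a ≤ r • e) → a ≤ 0)
    (hnorm : ∀ a : A, ‖a‖ = sInf {r : ℝ | 0 ≤ r ∧ -(r • e) ≤ a ∧ a ≤ r • e})
    (L : A → ℝ)
    (hLadd : ∀ a b : A, L (a + b) ≤ L a + L b)
    (hLsmul : ∀ (t : ℝ) (a : A), L (t • a) = |t| * L a)
    (hLnull : ∀ a : A, L a = 0 ↔ ∃ t : ℝ, a = t • e)
    (r : ℝ) (hr : 0 ≤ r) :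
    (∀ μ ν : A →L[ℝ] ℝ, IsState e μ → IsState e ν →
        rhoL L μ ν ≤ ENNReal.ofReal (2 * r)) ↔
      (∀ a : A, sInf {c : ℝ | ∃ s : ℝ, c = ‖a + s • e‖} ≤
        r * sInf {c : ℝ | ∃ s : ℝ, c = L (a + s • e)}) := by
  have : IsOrderedAddMonoid A := { add_le_add_left := fun a b h c => haddle a b c h }
  have : PosSMulMono ℝ A := .of_smul_nonneg fun r hr a ha => hsmulle r a hr ha
  have hu : IsArchimedeanOrderUnit e := ⟨pos_of_norm_eq_sInf he (hnorm e), hunit, harch⟩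
  have hnorm' a := (hnorm a).trans (hu.sInf_orderUnitNorm_eq a)
  have hL0 : ∀ a, 0 ≤ L a :=
    apply_nonneg (Seminorm.of (𝕜 := ℝ) L hLadd (by simpa using hLsmul))
  change _ ↔ ∀ a : A, cosetInf (‖·‖) e a ≤ r * cosetInf L e a
  constructor
  · intro hρ a
    refine (hu.cosetInf_norm_le hnorm' a).trans (le_mul_cosetInf hr fun s => ?_)
    linarith [hu.orderUnitSup_add_orderUnitSup_neg_le hnorm' hL0 hLsmul (fun b => (hLnull b).mp)
      (by positivity) hρ a s]
  · intro hq μ ν hμ hν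
    refine iSup₂_le fun a ha => ENNReal.ofReal_le_ofReal ?_
    calc |μ a - ν a| ≤ 2 * cosetInf (‖·‖) e a := abs_sub_le_two_mul_cosetInf_norm hμ hν a
      _ ≤ 2 * (r * L a) := by
        gcongr
        exact (hq a).trans (mul_le_mul_of_nonneg_left (by simpa using cosetInf_le hL0 0) hr)
      _ ≤ 2 * r := by nlinarith [hL0 a]
end

section
/- Let A be a linear subspace of bounded self-adjoint operators on a Hilbert space H containing the identity. Let D be an essentially self-adjoint operator on H whose domain D(D) is mapped into itself by each a ∈ A, and assume [D,a] is bounded on D(D) for each a ∈ A. Define L(a) = ‖[D,a]‖ (operator norm of the unique bounded extension). Then L is lower semicontinuous for the operator norm on A: if a_n → a in operator norm and L(a_n) ≤ k for all n, then L(a) ≤ k. -/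
open scoped InnerProductSpace

/-- Let `𝒜` be a linear subspace of bounded self-adjoint operators on a
Hilbert space `H` containing the identity, and `D` an essentially self-adjoint operator
whose domain is mapped into itself by every `a ∈ 𝒜` and with `[D,a]` bounded on the
domain. If `a_n → a` in operator norm within `𝒜` and the bounded extensions `T_n` of
`[D,a_n]` satisfy `‖T_n‖ ≤ k`, then the bounded extension `T` of `[D,a]` satisfies
`‖T‖ ≤ k`; i.e. `L(a) = ‖[D,a]‖` is lower semicontinuous. -/
theorem stmt_7 {H : Type*} [NormedAddCommGroup H] [InnerProductSpace ℂ H]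
    [CompleteSpace H]
    (D : H →ₗ.[ℂ] H) (hdense : Dense (D.domain : Set H))
    (hesa : IsSelfAdjoint D.closure)
    (𝒜 : Set (H →L[ℂ] H))
    (h1 : (1 : H →L[ℂ] H) ∈ 𝒜)
    (hsa : ∀ a ∈ 𝒜, IsSelfAdjoint a)
    (hadd : ∀ a ∈ 𝒜, ∀ b ∈ 𝒜, a + b ∈ 𝒜)
    (hsmul : ∀ (t : ℝ), ∀ a ∈ 𝒜, (t : ℂ) • a ∈ 𝒜)
    (hinv : ∀ a ∈ 𝒜, ∀ x : D.domain, a (x : H) ∈ D.domain)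
    (an : ℕ → H →L[ℂ] H) (a : H →L[ℂ] H)
    (han : ∀ n, an n ∈ 𝒜) (ha : a ∈ 𝒜)
    (Tn : ℕ → H →L[ℂ] H) (T : H →L[ℂ] H)
    (hTn : ∀ n, ∀ x : D.domain,
      Tn n (x : H) = D ⟨an n (x : H), hinv (an n) (han n) x⟩ - an n (D x))
    (hT : ∀ x : D.domain, T (x : H) = D ⟨a (x : H), hinv a ha x⟩ - a (D x))
    (hconv : Filter.Tendsto an Filter.atTop (nhds a))
    (k : ℝ) (hk : ∀ n, ‖Tn n‖ ≤ k) :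
    ‖T‖ ≤ k := by
  have hk0 : (0 : ℝ) ≤ k := le_trans (norm_nonneg _) (hk 0)
  -- D.closure is symmetric
  have hcd : Dense (D.closure.domain : Set H) := hesa.dense_domain
  have hFA : D.closure.IsFormalAdjoint D.closure := by
    have h := LinearPMap.adjoint_isFormalAdjoint (T := D.closure) hcd
    rwa [LinearPMap.isSelfAdjoint_def.mp hesa] at h
  -- D is symmetric on its domain
  have hsym : ∀ u v : D.domain, ⟪(D u : H), (v : H)⟫_ℂ = ⟪(u : H), D v⟫_ℂ := by
    intro u v
    have hu : (u : H) ∈ D.closure.domain := D.le_closure.1 u.2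
    have hv : (v : H) ∈ D.closure.domain := D.le_closure.1 v.2
    have h1 : D u = D.closure ⟨(u : H), hu⟩ := D.le_closure.2 rfl
    have h2 : D v = D.closure ⟨(v : H), hv⟩ := D.le_closure.2 rfl
    rw [h1, h2]
    exact hFA ⟨(u : H), hu⟩ ⟨(v : H), hv⟩
  -- general matrix element formula
  have key : ∀ (b : H →L[ℂ] H) (hb : b ∈ 𝒜) (S : H →L[ℂ] H)
      (hS : ∀ x : D.domain, S (x : H) = D ⟨b (x : H), hinv b hb x⟩ - b (D x))
      (x y : D.domain),
      ⟪(y : H), S (x : H)⟫_ℂ = ⟪(D y : H), b (x : H)⟫_ℂ - ⟪b (y : H), (D x : H)⟫_ℂ := by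
    intro b hb S hS x y
    rw [hS x, inner_sub_right]
    congr 1
    · exact (hsym y ⟨b (x : H), hinv b hb x⟩).symm
    · exact ((hsa b hb).isSymmetric (y : H) (D x)).symm
  -- convergence of matrix elements
  have hbound : ∀ x y : D.domain, ‖⟪(y : H), T (x : H)⟫_ℂ‖ ≤ k * ‖(x : H)‖ * ‖(y : H)‖ := by
    intro x y
    have happ : ∀ z : H, Filter.Tendsto (fun n => an n z) Filter.atTop (nhds (a z)) := by
      intro z
      exact ((ContinuousLinearMap.apply ℂ H z).continuous.tendsto a).comp hconv
    have hlim : Filter.Tendsto (fun n => ⟪(y : H), Tn n (x : H)⟫_ℂ) Filter.atTop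
        (nhds ⟪(y : H), T (x : H)⟫_ℂ) := by
      have h1 : Filter.Tendsto (fun n => ⟪(D y : H), an n (x : H)⟫_ℂ - ⟪an n (y : H), (D x : H)⟫_ℂ)
          Filter.atTop (nhds (⟪(D y : H), a (x : H)⟫_ℂ - ⟪a (y : H), (D x : H)⟫_ℂ)) :=
        ((tendsto_const_nhds.inner (happ (x : H))).sub ((happ (y : H)).inner tendsto_const_nhds))
      rw [key a ha T hT x y]
      refine h1.congr fun n => ?_
      exact (key (an n) (han n) (Tn n) (hTn n) x y).symm
    refine le_of_tendsto (hlim.norm) (Filter.Eventually.of_forall fun n => ?_)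
    calc ‖⟪(y : H), Tn n (x : H)⟫_ℂ‖ ≤ ‖(y : H)‖ * ‖Tn n (x : H)‖ := norm_inner_le_norm _ _
      _ ≤ ‖(y : H)‖ * (k * ‖(x : H)‖) := by
          refine mul_le_mul_of_nonneg_left ?_ (norm_nonneg _)
          exact le_trans ((Tn n).le_opNorm _)
            (mul_le_mul_of_nonneg_right (hk n) (norm_nonneg _))
      _ = k * ‖(x : H)‖ * ‖(y : H)‖ := by ring
  -- extend in y by density
  have hbound2 : ∀ (x : D.domain) (y : H), ‖⟪y, T (x : H)⟫_ℂ‖ ≤ k * ‖(x : H)‖ * ‖y‖ := by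
    intro x y
    have hcl : IsClosed {y : H | ‖⟪y, T (x : H)⟫_ℂ‖ ≤ k * ‖(x : H)‖ * ‖y‖} := by
      apply isClosed_le
      · exact (Continuous.inner continuous_id continuous_const).norm
      · exact continuous_const.mul continuous_norm
    have hsub : (D.domain : Set H) ⊆ {y : H | ‖⟪y, T (x : H)⟫_ℂ‖ ≤ k * ‖(x : H)‖ * ‖y‖} := by
      rintro z hz
      exact hbound x ⟨z, hz⟩
    exact (hcl.closure_subset_iff.mpr hsub) (hdense y)
  -- pointwise norm bound on the domain
  have hbound3 : ∀ x : D.domain, ‖T (x : H)‖ ≤ k * ‖(x : H)‖ := by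
    intro x
    have h := hbound2 x (T (x : H))
    rw [inner_self_eq_norm_sq_to_K (𝕜 := ℂ)] at h
    simp only [norm_pow, RCLike.norm_ofReal, Complex.norm_real, norm_norm, abs_norm] at h
    rcases eq_or_lt_of_le (norm_nonneg (T (x : H))) with h0 | h0
    · rw [← h0]
      positivity
    · nlinarith [h]
  -- extend in x by density
  have hbound4 : ∀ x : H, ‖T x‖ ≤ k * ‖x‖ := by
    intro x
    have hcl : IsClosed {x : H | ‖T x‖ ≤ k * ‖x‖} :=
      isClosed_le (T.continuous.norm) (continuous_const.mul continuous_norm)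
    have hsub : (D.domain : Set H) ⊆ {x : H | ‖T x‖ ≤ k * ‖x‖} := fun z hz => hbound3 ⟨z, hz⟩
    exact (hcl.closure_subset_iff.mpr hsub) (hdense x)
  exact T.opNorm_le_bound hk0 hbound4
end

section
/- Let L be a lower semicontinuous Lipschitz seminorm on an order-unit space A with completion Ā. Let L̄ be the Minkowski functional of the closure in Ā of L₁ = {a ∈ A : L(a) ≤ 1} (allowing value +∞). Then L̄ extends L, i.e., L̄(a) = L(a) for all a ∈ A, and the metrics on S(A) induced by L̄ and L coincide: ρ_{L̄} = ρ_L. -/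
open scoped ENNReal Pointwise

/-- The Minkowski functional (gauge) of a subset `C` of `B`, with values in `[0,∞]`:
`inf {r > 0 : b ∈ r·C}` (and `+∞` if there is no such `r`). -/
noncomputable def gauge' {B : Type*} [NormedAddCommGroup B] [NormedSpace ℝ B]
    (C : Set B) (b : B) : ℝ≥0∞ :=
  sInf {r : ℝ≥0∞ | ∃ s : ℝ, 0 < s ∧ r = ENNReal.ofReal s ∧ b ∈ s • C}

/-- If `ι` is a linear isometry and `S` closed, then `ι x ∈ closure (ι '' S) ↔ x ∈ S`. -/
lemma mem_closure_image_iff_aux {A B : Type*} [NormedAddCommGroup A] [NormedSpace ℝ A]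
    [NormedAddCommGroup B] [NormedSpace ℝ B]
    (ι : A →ₗᵢ[ℝ] B) {S : Set A} (hS : IsClosed S) (x : A) :
    ι x ∈ closure (ι '' S) ↔ x ∈ S := by
  constructor
  · intro hx
    rw [mem_closure_iff_seq_limit] at hx
    obtain ⟨u, hu, hlim⟩ := hx
    choose v hv hvu using hu
    have hvx : Filter.Tendsto v Filter.atTop (nhds x) := by
      rw [tendsto_iff_dist_tendsto_zero]
      have : ∀ n, dist (v n) x = dist (u n) (ι x) := by
        intro n
        rw [← hvu n, ι.dist_map]
      simp_rw [this]
      exact tendsto_iff_dist_tendsto_zero.mp hlim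
    exact hS.mem_of_tendsto hvx (Filter.Eventually.of_forall hv)
  · intro hx
    exact subset_closure ⟨x, hx, rfl⟩

/-- Let `L` be a lower semicontinuous Lipschitz seminorm on an
order-unit space `A`, `ι : A → Ā` the inclusion into the completion, and `L̄` the
Minkowski functional of the closure in `Ā` of `L₁ = {a : L(a) ≤ 1}`. Then `L̄`
extends `L`, and the metrics induced on the state space by `L̄` and `L` coincide. -/
theorem stmt_11 {A B : Type*} [NormedAddCommGroup A] [NormedSpace ℝ A]
    [PartialOrder A] [NormedAddCommGroup B] [NormedSpace ℝ B] [CompleteSpace B]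
    (e : A)
    (haddle : ∀ a b c : A, a ≤ b → a + c ≤ b + c)
    (hsmulle : ∀ (r : ℝ) (a : A), 0 ≤ r → 0 ≤ a → 0 ≤ r • a)
    (hunit : ∀ a : A, ∃ r : ℝ, a ≤ r • e)
    (harch : ∀ a : A, (∀ r : ℝ, 0 < r → a ≤ r • e) → a ≤ 0)
    (hnorm : ∀ a : A, ‖a‖ = sInf {r : ℝ | 0 ≤ r ∧ -(r • e) ≤ a ∧ a ≤ r • e})
    (ι : A →ₗᵢ[ℝ] B) (hι : DenseRange ι)
    (L : A → ℝ)
    (hLadd : ∀ a b : A, L (a + b) ≤ L a + L b)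
    (hLsmul : ∀ (t : ℝ) (a : A), L (t • a) = |t| * L a)
    (hLnull : ∀ a : A, L a = 0 ↔ ∃ t : ℝ, a = t • e)
    (hlsc : IsClosed {a : A | L a ≤ 1}) :
    (∀ a : A, gauge' (closure (ι '' {a : A | L a ≤ 1})) (ι a) = ENNReal.ofReal (L a)) ∧
    (∀ μ ν : B →L[ℝ] ℝ, IsState (ι e) μ → IsState (ι e) ν →
      (⨆ (b : B) (_ : gauge' (closure (ι '' {a : A | L a ≤ 1})) b ≤ 1),
          ENNReal.ofReal |μ b - ν b|) =
        ⨆ (a : A) (_ : L a ≤ 1), ENNReal.ofReal |μ (ι a) - ν (ι a)|) := by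
  set C : Set B := closure (ι '' {a : A | L a ≤ 1}) with hCdef
  -- nonnegativity of L
  have hL0' : L 0 = 0 := by
    have := hLsmul 0 0
    simpa using this
  have hLneg : ∀ a : A, L (-a) = L a := by
    intro a
    have := hLsmul (-1) a
    simpa using this
  have hL0 : ∀ a : A, 0 ≤ L a := by
    intro a
    have h1 : L (a + (-a)) ≤ L a + L (-a) := hLadd a (-a)
    rw [add_neg_cancel, hL0', hLneg] at h1
    linarith
  -- key membership characterization
  have key : ∀ (s : ℝ), 0 < s → ∀ a : A, (ι a ∈ s • C ↔ L a ≤ s) := by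
    intro s hs a
    rw [Set.mem_smul_set_iff_inv_smul_mem₀ (ne_of_gt hs), ← ι.map_smul,
      hCdef, mem_closure_image_iff_aux ι hlsc]
    have : L (s⁻¹ • a) = s⁻¹ * L a := by
      rw [hLsmul, abs_of_pos (inv_pos.mpr hs)]
    rw [Set.mem_setOf_eq, this, inv_mul_le_iff₀ hs, mul_one]
  -- Part 1: the gauge extends L
  have hgauge : ∀ a : A, gauge' C (ι a) = ENNReal.ofReal (L a) := by
    intro a
    apply le_antisymm
    · refine ENNReal.le_of_forall_pos_le_add fun ε hε _ => ?_
      have hεR : (0:ℝ) < (ε : ℝ) := hε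
      have hs : (0:ℝ) < L a + ε := add_pos_of_nonneg_of_pos (hL0 a) hεR
      have hmem : ENNReal.ofReal (L a + ε) ∈
          {r : ℝ≥0∞ | ∃ s : ℝ, 0 < s ∧ r = ENNReal.ofReal s ∧ ι a ∈ s • C} :=
        ⟨L a + ε, hs, rfl, (key _ hs a).mpr (le_add_of_nonneg_right hεR.le)⟩
      calc gauge' C (ι a) ≤ ENNReal.ofReal (L a + ε) := sInf_le hmem
        _ = ENNReal.ofReal (L a) + ENNReal.ofReal (ε : ℝ) :=
            ENNReal.ofReal_add (hL0 a) hεR.le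
        _ = ENNReal.ofReal (L a) + ε := by rw [ENNReal.ofReal_coe_nnreal]
    · refine le_sInf fun r hr => ?_
      obtain ⟨s, hs, rfl, hmem⟩ := hr
      exact ENNReal.ofReal_le_ofReal ((key s hs a).mp hmem)
  refine ⟨hgauge, fun μ ν hμ hν => ?_⟩
  -- Part 2
  set S : ℝ≥0∞ := ⨆ (a : A) (_ : L a ≤ 1), ENNReal.ofReal |μ (ι a) - ν (ι a)| with hSdef
  have hμnorm : ∀ x : B, |μ x| ≤ ‖x‖ := by
    intro x
    have := μ.le_opNorm x
    rw [hμ.2] at this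
    simpa using this
  have hνnorm : ∀ x : B, |ν x| ≤ ‖x‖ := by
    intro x
    have := ν.le_opNorm x
    rw [hν.2] at this
    simpa using this
  apply le_antisymm
  · refine iSup₂_le fun b hb => ?_
    refine ENNReal.le_of_forall_pos_le_add fun ε hε hS => ?_
    have hεR : (0:ℝ) < (ε : ℝ) := hε
    set M : ℝ := S.toReal with hMdef
    have hM0 : 0 ≤ M := ENNReal.toReal_nonneg
    have hM : ∀ a : A, L a ≤ 1 → |μ (ι a) - ν (ι a)| ≤ M := by
      intro a ha
      have h1 : ENNReal.ofReal |μ (ι a) - ν (ι a)| ≤ S :=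
        le_iSup₂_of_le a ha le_rfl
      have h2 := ENNReal.toReal_mono hS.ne h1
      rwa [ENNReal.toReal_ofReal (abs_nonneg _)] at h2
    set δ : ℝ := min 1 ((ε : ℝ) / (M + 4)) with hδdef
    have hδpos : 0 < δ := lt_min one_pos (div_pos hεR (by linarith))
    have hδ1 : δ ≤ 1 := min_le_left _ _
    have hδ2 : δ ≤ (ε : ℝ) / (M + 4) := min_le_right _ _
    -- get s and c
    have h1δ : (0:ℝ) < 1 + δ := by linarith
    have hlt : gauge' C b < ENNReal.ofReal (1 + δ) := by
      refine lt_of_le_of_lt hb ?_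
      rw [← ENNReal.ofReal_one, ENNReal.ofReal_lt_ofReal_iff h1δ]
      linarith
    obtain ⟨r, hr, hrlt⟩ := sInf_lt_iff.mp hlt
    obtain ⟨s, hs, rfl, hmem⟩ := hr
    have hslt : s < 1 + δ := (ENNReal.ofReal_lt_ofReal_iff h1δ).mp hrlt
    obtain ⟨c, hc, hbc⟩ := hmem
    obtain ⟨y, hy, hdy⟩ := Metric.mem_closure_iff.mp hc δ hδpos
    obtain ⟨a, ha, rfl⟩ := hy
    -- distance estimate
    have hdist : ‖b - ι (s • a)‖ ≤ (1 + δ) * δ := by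
      rw [← hbc, ι.map_smul, ← smul_sub]
      rw [norm_smul, Real.norm_eq_abs, abs_of_pos hs]
      have : ‖c - ι a‖ < δ := by rwa [← dist_eq_norm]
      nlinarith
    have hcore : |μ (ι (s • a)) - ν (ι (s • a))| ≤ (1 + δ) * M := by
      have h1 : ι (s • a) = s • ι a := ι.map_smul s a
      rw [h1, map_smul, map_smul]
      have : s • μ (ι a) - s • ν (ι a) = s * (μ (ι a) - ν (ι a)) := by rw [smul_eq_mul, smul_eq_mul]; ring
      rw [this, abs_mul, abs_of_pos hs]
      have := hM a ha
      nlinarith [abs_nonneg (μ (ι a) - ν (ι a))]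
    have hfinal : |μ b - ν b| ≤ M + ε := by
      have hdecomp : μ b - ν b =
          (μ (b - ι (s • a)) - ν (b - ι (s • a))) + (μ (ι (s • a)) - ν (ι (s • a))) := by
        rw [map_sub, map_sub]; ring
      have h1 : |μ (b - ι (s • a))| ≤ (1 + δ) * δ := le_trans (hμnorm _) hdist
      have h2 : |ν (b - ι (s • a))| ≤ (1 + δ) * δ := le_trans (hνnorm _) hdist
      have h3 : |μ b - ν b| ≤ |μ (b - ι (s • a))| + |ν (b - ι (s • a))|
          + |μ (ι (s • a)) - ν (ι (s • a))| := by
        rw [hdecomp]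
        refine le_trans (abs_add_le _ _) ?_
        gcongr
        exact abs_sub _ _
      have hδε : δ * (M + 4) ≤ (ε : ℝ) := by
        rw [← le_div_iff₀ (by linarith : (0:ℝ) < M + 4)]
        exact hδ2
      nlinarith
    calc ENNReal.ofReal |μ b - ν b| ≤ ENNReal.ofReal (M + ε) :=
          ENNReal.ofReal_le_ofReal hfinal
      _ = ENNReal.ofReal M + ENNReal.ofReal (ε : ℝ) := ENNReal.ofReal_add hM0 hεR.le
      _ = S + ε := by rw [hMdef, ENNReal.ofReal_toReal hS.ne, ENNReal.ofReal_coe_nnreal]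
  · refine iSup₂_le fun a ha => ?_
    refine le_iSup₂_of_le (ι a) ?_ le_rfl
    rw [hgauge a]
    exact ENNReal.ofReal_le_one.mpr ha
end

section
/- Let A = C(X) for the 3-point space X, identified with diagonal 3×3 real matrices, and let D be the skew-symmetric matrix with entries D₁₃ = α, D₂₃ = β, D₃₁ = -α, D₃₂ = -β (α, β > 0) and zeros elsewhere. For real f = (f₁,f₂,f₃) ∈ A, the operator norm of the commutator satisfies ‖[D,f]‖ = (α²(f₃-f₁)² + β²(f₃-f₂)²)^{1/2}. -/
lemma clm_apply (A : Matrix (Fin 3) (Fin 3) ℝ) (x : EuclideanSpace ℝ (Fin 3)) (i : Fin 3) :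
    Matrix.toEuclideanCLM (𝕜 := ℝ) A x i = ∑ j, A i j * x j := rfl

lemma norm_aux (a b : ℝ) :
    ‖Matrix.toEuclideanCLM (𝕜 := ℝ) (n := Fin 3)
        (Matrix.of ![![0, 0, a], ![0, 0, b], ![a, b, 0]])‖ = Real.sqrt (a ^ 2 + b ^ 2) := by
  set T := Matrix.toEuclideanCLM (𝕜 := ℝ) (n := Fin 3)
      (Matrix.of ![![0, 0, a], ![0, 0, b], ![a, b, 0]]) with hT
  set s := Real.sqrt (a ^ 2 + b ^ 2) with hs
  have hs0 : 0 ≤ s := Real.sqrt_nonneg _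
  have hs2 : s ^ 2 = a ^ 2 + b ^ 2 := Real.sq_sqrt (by positivity)
  have happ : ∀ x : EuclideanSpace ℝ (Fin 3),
      (T x 0 = a * x 2) ∧ (T x 1 = b * x 2) ∧ (T x 2 = a * x 0 + b * x 1) := by
    intro x
    refine ⟨?_, ?_, ?_⟩ <;>
      simp [hT, clm_apply, Fin.sum_univ_three, Matrix.of_apply]
  have hnorm : ∀ x : EuclideanSpace ℝ (Fin 3),
      ‖T x‖ ^ 2 = (a * x 2) ^ 2 + (b * x 2) ^ 2 + (a * x 0 + b * x 1) ^ 2 := by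
    intro x
    obtain ⟨h0, h1, h2⟩ := happ x
    rw [EuclideanSpace.norm_eq, Real.sq_sqrt (by positivity)]
    simp [Fin.sum_univ_three, h0, h1, h2, sq_abs]
  apply le_antisymm
  · refine ContinuousLinearMap.opNorm_le_bound _ hs0 fun x => ?_
    have hx2 : ‖x‖ ^ 2 = x 0 ^ 2 + x 1 ^ 2 + x 2 ^ 2 := by
      rw [EuclideanSpace.norm_eq, Real.sq_sqrt (by positivity)]
      simp [Fin.sum_univ_three, sq_abs]
    have key : ‖T x‖ ^ 2 ≤ (s * ‖x‖) ^ 2 := by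
      rw [hnorm x]
      nlinarith [sq_nonneg (a * x 1 - b * x 0), hs2, hx2]
    have := Real.sqrt_le_sqrt key
    rwa [Real.sqrt_sq (norm_nonneg _), Real.sqrt_sq (by positivity)] at this
  · rcases eq_or_lt_of_le hs0 with h | h
    · rw [← h]; exact norm_nonneg _
    · set v : EuclideanSpace ℝ (Fin 3) := (WithLp.equiv 2 (Fin 3 → ℝ)).symm ![a, b, s] with hv
      have hv0 : v 0 = a := rfl
      have hv1 : v 1 = b := rfl
      have hv2 : v 2 = s := rfl
      have hTv : T v = s • v := by
        ext i
        obtain ⟨h0, h1, h2⟩ := happ v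
        fin_cases i <;>
          simp [h0, h1, h2, hv0, hv1, hv2] <;> ring_nf <;> nlinarith [hs2]
      have hvne : v ≠ 0 := by
        intro hcontra
        have : v 2 = 0 := by rw [hcontra]; rfl
        rw [hv2] at this; exact h.ne' this
      have hvpos : 0 < ‖v‖ := norm_pos_iff.mpr hvne
      have : s * ‖v‖ ≤ ‖T‖ * ‖v‖ := by
        calc s * ‖v‖ = ‖T v‖ := by rw [hTv, norm_smul, Real.norm_of_nonneg hs0]
          _ ≤ ‖T‖ * ‖v‖ := T.le_opNorm v
      exact le_of_mul_le_mul_right this hvpos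

/-- For the skew-symmetric "Dirac" matrix `D` with `D₁₃ = α`,
`D₂₃ = β`, `D₃₁ = -α`, `D₃₂ = -β` and a real diagonal matrix `f = diag(f₁,f₂,f₃)`,
the operator norm of the commutator is
`‖[D,f]‖ = (α²(f₃-f₁)² + β²(f₃-f₂)²)^{1/2}`. -/
theorem stmt_13 (α β : ℝ) (hα : 0 < α) (hβ : 0 < β) (f : Fin 3 → ℝ) :
    ‖Matrix.toEuclideanCLM (𝕜 := ℝ) (n := Fin 3)
        (Matrix.of ![![0, 0, α], ![0, 0, β], ![-α, -β, 0]] * Matrix.diagonal f -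
          Matrix.diagonal f * Matrix.of ![![0, 0, α], ![0, 0, β], ![-α, -β, 0]])‖ =
      Real.sqrt (α ^ 2 * (f 2 - f 0) ^ 2 + β ^ 2 * (f 2 - f 1) ^ 2) := by
  have hmat : Matrix.of ![![0, 0, α], ![0, 0, β], ![-α, -β, 0]] * Matrix.diagonal f -
      Matrix.diagonal f * Matrix.of ![![0, 0, α], ![0, 0, β], ![-α, -β, 0]] =
      Matrix.of ![![0, 0, α * (f 2 - f 0)], ![0, 0, β * (f 2 - f 1)],
        ![α * (f 2 - f 0), β * (f 2 - f 1), 0]] := by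
    ext i j
    fin_cases i <;> fin_cases j <;>
      simp [Matrix.mul_apply, Matrix.diagonal, Fin.sum_univ_three, Matrix.vecHead, Matrix.vecTail] <;> ring
  rw [hmat, norm_aux]
  congr 1
  ring
end

section
/- With A, D as in Example 7.1 (D skew-symmetric with D₁₃ = α, D₂₃ = β, α,β > 0, and L(f) = ‖[D,f]‖), the induced metric ρ_L on the state space of A = ℝ³ (probability vectors μ = (μ₁,μ₂,μ₃)) is ρ_L(μ,ν) = ((μ₁-ν₁)²/α² + (μ₂-ν₂)²/β²)^{1/2}. In particular the distances between the three extreme points δ₁, δ₂, δ₃ are ρ_L(δ₁,δ₃) = 1/α, ρ_L(δ₂,δ₃) = 1/β, and ρ_L(δ₁,δ₂) = (1/α² + 1/β²)^{1/2}. -/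
/-!
Write `a = μ - ν`, so that `a₃ = -(a₁ + a₂)`. Then
`μ(f) - ν(f) = -((a₁/α)·α(f₃-f₁) + (a₂/β)·β(f₃-f₂))`, while `L(f)` is the Euclidean norm of
`(α(f₃-f₁), β(f₃-f₂))`, a vector which ranges over all of `ℝ²` as `f` varies. Hence `ρ_L(μ,ν)`
is the dual of the Euclidean norm evaluated at `(a₁/α, a₂/β)`, i.e. its Euclidean norm, by
Cauchy–Schwarz.
-/

/-- The Lipschitz seminorm of Example 7.1:
`L(f) = (α²(f₃-f₁)² + β²(f₃-f₂)²)^{1/2}` on `ℝ³`. -/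
noncomputable def LDirac (α β : ℝ) (f : Fin 3 → ℝ) : ℝ :=
  Real.sqrt (α ^ 2 * (f 2 - f 0) ^ 2 + β ^ 2 * (f 2 - f 1) ^ 2)

/-- The metric on probability vectors induced by `LDirac`:
`ρ(μ,ν) = sup {|μ(f) - ν(f)| : L(f) ≤ 1}`. -/
noncomputable def rhoEx (α β : ℝ) (μ ν : Fin 3 → ℝ) : ℝ :=
  sSup {t : ℝ | ∃ f : Fin 3 → ℝ, LDirac α β f ≤ 1 ∧
    t = |∑ i, μ i * f i - ∑ i, ν i * f i|}

open RealInnerProductSpace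

theorem sSup_abs_inner_of_norm_le_one {E : Type*} [NormedAddCommGroup E] [InnerProductSpace ℝ E]
    (p : E) : sSup {t : ℝ | ∃ x : E, ‖x‖ ≤ 1 ∧ t = |⟪p, x⟫|} = ‖p‖ := by
  have hle : ∀ t ∈ {t : ℝ | ∃ x : E, ‖x‖ ≤ 1 ∧ t = |⟪p, x⟫|}, t ≤ ‖p‖ := by
    rintro t ⟨x, hx, rfl⟩
    calc |⟪p, x⟫| ≤ ‖p‖ * ‖x‖ := abs_real_inner_le_norm p x
      _ ≤ ‖p‖ * 1 := by gcongr
      _ = ‖p‖ := mul_one _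
  have hmem : ‖p‖ ∈ {t : ℝ | ∃ x : E, ‖x‖ ≤ 1 ∧ t = |⟪p, x⟫|} := by
    refine ⟨‖p‖⁻¹ • p, ?_, ?_⟩
    · rw [norm_smul, norm_inv, norm_norm]
      exact inv_mul_le_one_of_le₀ le_rfl (norm_nonneg p)
    · rcases eq_or_ne p 0 with rfl | hp
      · simp
      · rw [real_inner_smul_right, real_inner_self_eq_norm_sq, sq, inv_mul_cancel_left₀
          (norm_ne_zero_iff.mpr hp), abs_norm]
  exact le_antisymm (csSup_le ⟨_, hmem⟩ hle) (le_csSup ⟨_, hle⟩ hmem)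

noncomputable def diracGrad (α β : ℝ) (f : Fin 3 → ℝ) : EuclideanSpace ℝ (Fin 2) :=
  !₂[α * (f 2 - f 0), β * (f 2 - f 1)]

theorem LDirac_eq_norm_diracGrad (α β : ℝ) (f : Fin 3 → ℝ) :
    LDirac α β f = ‖diracGrad α β f‖ := by
  simp [LDirac, diracGrad, EuclideanSpace.norm_eq, Fin.sum_univ_two, mul_pow]

theorem diracGrad_surjective {α β : ℝ} (hα : α ≠ 0) (hβ : β ≠ 0) :
    Function.Surjective (diracGrad α β) := by
  intro x
  refine ⟨![-x 0 / α, -x 1 / β, 0], ?_⟩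
  ext i
  fin_cases i <;> simp [diracGrad] <;> field_simp

theorem sum_mul_sub_sum_mul_eq_neg_inner_diracGrad {α β : ℝ} (hα : α ≠ 0) (hβ : β ≠ 0)
    {μ ν : Fin 3 → ℝ} (hsum : ∑ i, μ i = ∑ i, ν i) (f : Fin 3 → ℝ) :
    ∑ i, μ i * f i - ∑ i, ν i * f i =
      -⟪!₂[(μ 0 - ν 0) / α, (μ 1 - ν 1) / β], diracGrad α β f⟫ := by
  simp only [Fin.sum_univ_three] at hsum
  simp [diracGrad, PiLp.inner_apply, Fin.sum_univ_two, Fin.sum_univ_three]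
  field_simp
  linear_combination f 2 * hsum

theorem rhoEx_eq_sqrt {α β : ℝ} (hα : α ≠ 0) (hβ : β ≠ 0) {μ ν : Fin 3 → ℝ}
    (hsum : ∑ i, μ i = ∑ i, ν i) :
    rhoEx α β μ ν = Real.sqrt ((μ 0 - ν 0) ^ 2 / α ^ 2 + (μ 1 - ν 1) ^ 2 / β ^ 2) := by
  set p : EuclideanSpace ℝ (Fin 2) := !₂[(μ 0 - ν 0) / α, (μ 1 - ν 1) / β]
  have hset : {t : ℝ | ∃ f : Fin 3 → ℝ, LDirac α β f ≤ 1 ∧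
      t = |∑ i, μ i * f i - ∑ i, ν i * f i|} = {t : ℝ | ∃ x, ‖x‖ ≤ 1 ∧ t = |⟪p, x⟫|} := by
    ext t
    simp only [Set.mem_ofPred_eq, LDirac_eq_norm_diracGrad,
      sum_mul_sub_sum_mul_eq_neg_inner_diracGrad hα hβ hsum, abs_neg]
    exact ((diracGrad_surjective hα hβ).exists (p := fun x => ‖x‖ ≤ 1 ∧ t = |⟪p, x⟫|)).symm
  rw [rhoEx, hset, sSup_abs_inner_of_norm_le_one, EuclideanSpace.norm_eq]
  simp [p, Fin.sum_univ_two, div_pow]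

/-- The metric induced on the state space (probability vectors) by the
Dirac operator of Example 7.1 is `ρ_L(μ,ν) = ((μ₁-ν₁)²/α² + (μ₂-ν₂)²/β²)^{1/2}`; in
particular `ρ_L(δ₁,δ₃) = 1/α`, `ρ_L(δ₂,δ₃) = 1/β`, `ρ_L(δ₁,δ₂) = (1/α² + 1/β²)^{1/2}`. -/
theorem stmt_14 (α β : ℝ) (hα : 0 < α) (hβ : 0 < β) :
    (∀ μ ν : Fin 3 → ℝ,
      (∀ i, 0 ≤ μ i) → ∑ i, μ i = 1 → (∀ i, 0 ≤ ν i) → ∑ i, ν i = 1 →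
      rhoEx α β μ ν =
        Real.sqrt ((μ 0 - ν 0) ^ 2 / α ^ 2 + (μ 1 - ν 1) ^ 2 / β ^ 2)) ∧
    rhoEx α β (Pi.single 0 1) (Pi.single 2 1) = 1 / α ∧
    rhoEx α β (Pi.single 1 1) (Pi.single 2 1) = 1 / β ∧
    rhoEx α β (Pi.single 0 1) (Pi.single 1 1) =
      Real.sqrt (1 / α ^ 2 + 1 / β ^ 2) := by
  have hρ := @rhoEx_eq_sqrt α β hα.ne' hβ.ne'
  have hδ (i j : Fin 3) :
      ∑ k, (Pi.single i 1 : Fin 3 → ℝ) k = ∑ k, (Pi.single j 1 : Fin 3 → ℝ) k := by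
    simp
  refine ⟨fun μ ν _ hμ _ hν => hρ (hμ.trans hν.symm), ?_, ?_, ?_⟩
  · rw [hρ (hδ 0 2)]
    simp [Real.sqrt_inv, Real.sqrt_sq hα.le]
  · rw [hρ (hδ 1 2)]
    simp [Real.sqrt_inv, Real.sqrt_sq hβ.le]
  · rw [hρ (hδ 0 1)]
    simp
end

section
/- Let K be a convex subset of a real vector space V and ρ a metric on K that is convex (ρ(μ, tν₁ + (1-t)ν₂) ≤ tρ(μ,ν₁) + (1-t)ρ(μ,ν₂) for t ∈ [0,1]) and midpoint balanced ((μ+ν')/2 = (μ'+ν)/2 implies ρ(μ,ν) = ρ(μ',ν')). Then for all μ, ν ∈ K and t ∈ [0,1]: ρ(μ, tν + (1-t)μ) = t·ρ(μ,ν). -/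
/-- If `ρ` is a convex, midpoint-balanced metric on a convex set `K`,
then `ρ(μ, tν + (1-t)μ) = t·ρ(μ,ν)` for all `μ, ν ∈ K` and `t ∈ [0,1]`. -/
theorem stmt_18 {V : Type*} [AddCommGroup V] [Module ℝ V] (K : Set V)
    (hK : Convex ℝ K) (ρ : V → V → ℝ)
    (hzero : ∀ μ ∈ K, ∀ ν ∈ K, (ρ μ ν = 0 ↔ μ = ν))
    (hsymm : ∀ μ ∈ K, ∀ ν ∈ K, ρ μ ν = ρ ν μ)
    (htri : ∀ μ ∈ K, ∀ ν ∈ K, ∀ κ ∈ K, ρ μ κ ≤ ρ μ ν + ρ ν κ)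
    (hconvex : ∀ μ ∈ K, ∀ ν₁ ∈ K, ∀ ν₂ ∈ K, ∀ t ∈ Set.Icc (0 : ℝ) 1,
      ρ μ (t • ν₁ + (1 - t) • ν₂) ≤ t * ρ μ ν₁ + (1 - t) * ρ μ ν₂)
    (hbal : ∀ μ ∈ K, ∀ ν ∈ K, ∀ μ' ∈ K, ∀ ν' ∈ K,
      (2 : ℝ)⁻¹ • (μ + ν') = (2 : ℝ)⁻¹ • (μ' + ν) → ρ μ ν = ρ μ' ν') :
    ∀ μ ∈ K, ∀ ν ∈ K, ∀ t ∈ Set.Icc (0 : ℝ) 1,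
      ρ μ (t • ν + (1 - t) • μ) = t * ρ μ ν := by
  intro μ hμ ν hν t ht
  obtain ⟨ht0, ht1⟩ := ht
  have ht' : (1 - t) ∈ Set.Icc (0 : ℝ) 1 := ⟨by linarith, by linarith⟩
  have hνt : t • ν + (1 - t) • μ ∈ K := hK hν hμ ht0 (by linarith) (by ring)
  have hνt' : (1 - t) • ν + (1 - (1 - t)) • μ ∈ K :=
    hK hν hμ ht'.1 (by linarith) (by ring)
  have hρμμ : ρ μ μ = 0 := (hzero μ hμ μ hμ).mpr rfl
  -- upper bound
  have hup : ρ μ (t • ν + (1 - t) • μ) ≤ t * ρ μ ν := by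
    have := hconvex μ hμ ν hν μ hμ t ⟨ht0, ht1⟩
    rw [hρμμ] at this; linarith
  -- balance: ρ ν_t ν = ρ μ ν_{1-t}
  have hb : ρ (t • ν + (1 - t) • μ) ν = ρ μ ((1 - t) • ν + (1 - (1 - t)) • μ) := by
    apply hbal _ hνt ν hν μ hμ _ hνt'
    congr 1
    module
  have hc : ρ μ ((1 - t) • ν + (1 - (1 - t)) • μ) ≤ (1 - t) * ρ μ ν := by
    have := hconvex μ hμ ν hν μ hμ (1 - t) ht'
    rw [hρμμ] at this; linarith
  have htr := htri μ hμ (t • ν + (1 - t) • μ) hνt ν hν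
  rw [hb] at htr; linarith
end

section
/- Let K be a convex subset of a real vector space V spanning V⁰ = ℝ(K - K), and let ρ be a metric on K. Then there exists a norm M on V⁰ with ρ(μ,ν) = M(μ - ν) for all μ, ν ∈ K if and only if ρ is convex, midpoint balanced, and midpoint concave. Moreover M is unique. -/
/-!
If `ρ(μ, ν) = M(μ - ν)` for a norm `M`, the three properties follow from the triangle inequality
and homogeneity of `M`.

Conversely, convexity and midpoint balance force `ρ(ν, t • μ + (1 - t) • ν) = t ρ(ν, μ)` for
`t ∈ [0, 1]`: convexity gives `≤` for both `t` and `1 - t`, midpoint balance makes `ρ` invariant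
under translation inside `K`, and the triangle inequality through the point then gives `≥`.
Every element of `span ℝ (K - K)` is `t • (μ - ν)` with `t > 0` and `μ, ν ∈ K`, and homogeneity
along segments shows that `t ρ(μ, ν)` does not depend on the representation; this defines `M`.
For `x = t • (μ - ν)` and `y = s • (μ' - ν')`, the triangle inequality of `ρ` through
`t/(t+s) • ν + s/(t+s) • μ'` gives that of `M`. Any norm inducing `ρ` takes the value
`t ρ(μ, ν)` at `t • (μ - ν)`, hence is unique.
-/

open scoped Pointwise

/-- A metric `ρ` on a convex set `K` (encoded as a function `V → V → ℝ` with the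
metric axioms holding on `K`). -/
def IsMetricOn {V : Type*} [AddCommGroup V] [Module ℝ V] (K : Set V)
    (ρ : V → V → ℝ) : Prop :=
  (∀ μ ∈ K, ∀ ν ∈ K, (ρ μ ν = 0 ↔ μ = ν)) ∧
  (∀ μ ∈ K, ∀ ν ∈ K, ρ μ ν = ρ ν μ) ∧
  (∀ μ ∈ K, ∀ ν ∈ K, ∀ κ ∈ K, ρ μ κ ≤ ρ μ ν + ρ ν κ)

/-- A norm on the submodule `V⁰ = ℝ(K-K)`, encoded as a function with the norm axioms. -/
def IsNormOn {V : Type*} [AddCommGroup V] [Module ℝ V] (W : Submodule ℝ V)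
    (M : W → ℝ) : Prop :=
  (∀ x : W, (M x = 0 ↔ x = 0)) ∧
  (∀ x y : W, M (x + y) ≤ M x + M y) ∧
  (∀ (t : ℝ) (x : W), M (t • x) = |t| * M x)

section

open Set

variable {V : Type*} [AddCommGroup V] [Module ℝ V] {K : Set V} {ρ : V → V → ℝ}
  {M M' : Submodule.span ℝ (K - K) → ℝ}

def IsConvexMetric (K : Set V) (ρ : V → V → ℝ) : Prop :=
  ∀ μ ∈ K, ∀ ν₁ ∈ K, ∀ ν₂ ∈ K, ∀ t ∈ Icc (0 : ℝ) 1,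
    ρ μ (t • ν₁ + (1 - t) • ν₂) ≤ t * ρ μ ν₁ + (1 - t) * ρ μ ν₂

def IsMidpointBalanced (K : Set V) (ρ : V → V → ℝ) : Prop :=
  ∀ μ ∈ K, ∀ ν ∈ K, ∀ μ' ∈ K, ∀ ν' ∈ K,
    (2 : ℝ)⁻¹ • (μ + ν') = (2 : ℝ)⁻¹ • (μ' + ν) → ρ μ ν = ρ μ' ν'

def IsMidpointConcave (K : Set V) (ρ : V → V → ℝ) : Prop :=
  ∀ μ ∈ K, ∀ ν ∈ K, ∀ μ' ∈ K, ∀ ν' ∈ K,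
    ρ ((2 : ℝ)⁻¹ • (μ + μ')) ((2 : ℝ)⁻¹ • (ν + ν')) ≤ (ρ μ ν + ρ μ' ν') / 2

def spanSub {μ ν : V} (hμ : μ ∈ K) (hν : ν ∈ K) : Submodule.span ℝ (K - K) :=
  ⟨μ - ν, Submodule.subset_span (sub_mem_sub hμ hν)⟩

@[simp]
theorem coe_spanSub {μ ν : V} (hμ : μ ∈ K) (hν : ν ∈ K) : (spanSub hμ hν : V) = μ - ν :=
  rfl

def IsInducedBy (K : Set V) (ρ : V → V → ℝ) (M : Submodule.span ℝ (K - K) → ℝ) : Prop :=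
  ∀ μ (hμ : μ ∈ K) ν (hν : ν ∈ K), ρ μ ν = M (spanSub hμ hν)

def IsHomogeneousExtension (K : Set V) (ρ : V → V → ℝ)
    (M : Submodule.span ℝ (K - K) → ℝ) : Prop :=
  ∀ x : Submodule.span ℝ (K - K), ∀ t > (0 : ℝ), ∀ μ ∈ K, ∀ ν ∈ K,
    (x : V) = t • (μ - ν) → M x = t * ρ μ ν

theorem eq_zero_of_mem_span_empty_sub (x : Submodule.span ℝ ((∅ : Set V) - ∅)) : x = 0 :=
  Subtype.ext (by simpa using x.2)

theorem exists_pos_smul_sub_of_mem_span (hK : Convex ℝ K) (hne : K.Nonempty) {x : V}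
    (hx : x ∈ Submodule.span ℝ (K - K)) : ∃ t > (0 : ℝ), ∃ μ ∈ K, ∃ ν ∈ K, x = t • (μ - ν) := by
  obtain ⟨μ₀, hμ₀⟩ := hne
  induction hx using Submodule.span_induction with
  | mem y hy =>
    obtain ⟨μ, hμ, ν, hν, rfl⟩ := hy
    exact ⟨1, one_pos, μ, hμ, ν, hν, (one_smul ℝ _).symm⟩
  | zero => exact ⟨1, one_pos, μ₀, hμ₀, μ₀, hμ₀, by simp⟩
  | add y z _ _ ihy ihz =>
    obtain ⟨t, ht, μ, hμ, ν, hν, rfl⟩ := ihy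
    obtain ⟨s, hs, μ', hμ', ν', hν', rfl⟩ := ihz
    have hts : 0 < t + s := add_pos ht hs
    have hl : t / (t + s) ∈ Icc (0 : ℝ) 1 :=
      ⟨by positivity, (div_le_one hts).2 (le_add_of_nonneg_right hs.le)⟩
    refine ⟨t + s, hts, _, hK hμ hμ' hl.1 (sub_nonneg.2 hl.2) (add_sub_cancel _ _),
      _, hK hν hν' hl.1 (sub_nonneg.2 hl.2) (add_sub_cancel _ _), ?_⟩
    match_scalars <;> field_simp <;> ring
  | smul c y _ ihy =>
    obtain ⟨t, ht, μ, hμ, ν, hν, rfl⟩ := ihy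
    rcases lt_trichotomy c 0 with hc | rfl | hc
    · refine ⟨-c * t, mul_pos (neg_pos.2 hc) ht, ν, hν, μ, hμ, ?_⟩
      match_scalars <;> ring
    · exact ⟨1, one_pos, μ₀, hμ₀, μ₀, hμ₀, by simp⟩
    · exact ⟨c * t, mul_pos hc ht, μ, hμ, ν, hν, smul_smul c t _⟩

theorem IsInducedBy.isConvexMetric (h : IsInducedBy K ρ M) (hK : Convex ℝ K)
    (hM : IsNormOn _ M) : IsConvexMetric K ρ := by
  intro μ hμ ν₁ hν₁ ν₂ hν₂ t ⟨ht0, ht1⟩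
  have hν := hK hν₁ hν₂ ht0 (sub_nonneg.2 ht1) (add_sub_cancel t 1)
  have hsplit : spanSub hμ hν = t • spanSub hμ hν₁ + (1 - t) • spanSub hμ hν₂ :=
    Subtype.ext (by simp only [coe_spanSub, Submodule.coe_add, Submodule.coe_smul]; module)
  rw [h μ hμ _ hν, h μ hμ ν₁ hν₁, h μ hμ ν₂ hν₂, hsplit]
  calc _ ≤ M (t • spanSub hμ hν₁) + M ((1 - t) • spanSub hμ hν₂) := hM.2.1 _ _
    _ = _ := by rw [hM.2.2, hM.2.2, abs_of_nonneg ht0, abs_of_nonneg (sub_nonneg.2 ht1)]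

theorem IsInducedBy.isMidpointBalanced (h : IsInducedBy K ρ M) : IsMidpointBalanced K ρ := by
  intro μ hμ ν hν μ' hμ' ν' hν' hmid
  rw [h μ hμ ν hν, h μ' hμ' ν' hν']
  exact congrArg M <| Subtype.ext <|
    sub_eq_sub_iff_add_eq_add.2 (smul_right_injective V (by norm_num) hmid)

theorem IsInducedBy.isMidpointConcave (h : IsInducedBy K ρ M) (hK : Convex ℝ K)
    (hM : IsNormOn _ M) : IsMidpointConcave K ρ := by
  intro μ hμ ν hν μ' hμ' ν' hν'
  have mid : ∀ {a b}, a ∈ K → b ∈ K → (2 : ℝ)⁻¹ • (a + b) ∈ K := fun ha hb => by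
    rw [smul_add]; exact hK ha hb (by norm_num) (by norm_num) (by norm_num)
  have hsplit : spanSub (mid hμ hμ') (mid hν hν') =
      (2 : ℝ)⁻¹ • (spanSub hμ hν + spanSub hμ' hν') :=
    Subtype.ext (by simp only [coe_spanSub, Submodule.coe_add, Submodule.coe_smul]; module)
  rw [h _ (mid hμ hμ') _ (mid hν hν'), h μ hμ ν hν, h μ' hμ' ν' hν', hsplit, hM.2.2,
    abs_of_pos (by norm_num)]
  linarith [hM.2.1 (spanSub hμ hν) (spanSub hμ' hν')]

theorem IsNormOn.isHomogeneousExtension (hM : IsNormOn _ M) (h : IsInducedBy K ρ M) :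
    IsHomogeneousExtension K ρ M := by
  intro x t ht μ hμ ν hν hx
  rw [show x = t • spanSub hμ hν from Subtype.ext hx, hM.2.2, abs_of_pos ht, h μ hμ ν hν]

theorem IsHomogeneousExtension.unique (hM : IsHomogeneousExtension K ρ M)
    (hM' : IsHomogeneousExtension K ρ M') (hK : Convex ℝ K) (hne : K.Nonempty) : M = M' := by
  funext x
  obtain ⟨t, ht, μ, hμ, ν, hν, hx⟩ := exists_pos_smul_sub_of_mem_span hK hne x.2
  rw [hM x t ht μ hμ ν hν hx, hM' x t ht μ hμ ν hν hx]

theorem IsNormOn.eq_of_isInducedBy (hK : Convex ℝ K) (hM : IsNormOn _ M) (hM' : IsNormOn _ M')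
    (h : IsInducedBy K ρ M) (h' : IsInducedBy K ρ M') : M = M' := by
  rcases K.eq_empty_or_nonempty with rfl | hne
  · funext x
    rw [eq_zero_of_mem_span_empty_sub x, (hM.1 0).2 rfl, (hM'.1 0).2 rfl]
  exact (hM.isHomogeneousExtension h).unique (hM'.isHomogeneousExtension h') hK hne

theorem IsMidpointBalanced.eq_of_sub_eq (hbal : IsMidpointBalanced K ρ) {a b c d : V}
    (ha : a ∈ K) (hb : b ∈ K) (hc : c ∈ K) (hd : d ∈ K) (h : a - b = c - d) :
    ρ a b = ρ c d :=
  hbal a ha b hb c hc d hd (by rw [sub_eq_sub_iff_add_eq_add.1 h])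

theorem IsConvexMetric.dist_combo_le (hconv : IsConvexMetric K ρ) (hρ : IsMetricOn K ρ)
    {μ ν : V} (hμ : μ ∈ K) (hν : ν ∈ K) {t : ℝ} (ht : t ∈ Icc (0 : ℝ) 1) :
    ρ ν (t • μ + (1 - t) • ν) ≤ t * ρ ν μ := by
  have := hconv ν hν μ hμ ν hν t ht
  rwa [(hρ.1 ν hν ν hν).2 rfl, mul_zero, add_zero] at this

theorem IsConvexMetric.dist_combo_eq (hconv : IsConvexMetric K ρ) (hbal : IsMidpointBalanced K ρ)
    (hρ : IsMetricOn K ρ) (hK : Convex ℝ K) {μ ν : V} (hμ : μ ∈ K) (hν : ν ∈ K) {t : ℝ}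
    (ht : t ∈ Icc (0 : ℝ) 1) : ρ ν (t • μ + (1 - t) • ν) = t * ρ ν μ := by
  have ht' : 1 - t ∈ Icc (0 : ℝ) 1 := ⟨sub_nonneg.2 ht.2, sub_le_self 1 ht.1⟩
  have hp := hK hμ hν ht.1 ht'.1 (add_sub_cancel t 1)
  have hq := hK hμ hν ht'.1 (sub_nonneg.2 ht'.2) (add_sub_cancel (1 - t) 1)
  have hreflect : ρ (t • μ + (1 - t) • ν) μ = ρ ν ((1 - t) • μ + (1 - (1 - t)) • ν) :=
    hbal.eq_of_sub_eq hp hμ hν hq (by module)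
  have := hρ.2.2 ν hν _ hp μ hμ
  linarith [hconv.dist_combo_le hρ hμ hν ht, hconv.dist_combo_le hρ hμ hν ht']

theorem IsConvexMetric.dist_eq_mul_of_sub_eq_smul (hconv : IsConvexMetric K ρ)
    (hbal : IsMidpointBalanced K ρ) (hρ : IsMetricOn K ρ) (hK : Convex ℝ K) {a b μ ν : V}
    (ha : a ∈ K) (hb : b ∈ K) (hμ : μ ∈ K) (hν : ν ∈ K) {t : ℝ} (ht : t ∈ Icc (0 : ℝ) 1)
    (h : a - b = t • (μ - ν)) : ρ a b = t * ρ μ ν := by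
  rw [← hconv.dist_combo_eq hbal hρ hK hν hμ ht]
  exact hbal.eq_of_sub_eq ha hb hμ (hK hν hμ ht.1 (sub_nonneg.2 ht.2) (add_sub_cancel t 1))
    (by rw [h]; module)

theorem IsConvexMetric.mul_dist_eq_of_smul_sub_eq (hconv : IsConvexMetric K ρ)
    (hbal : IsMidpointBalanced K ρ) (hρ : IsMetricOn K ρ) (hK : Convex ℝ K) {μ ν μ' ν' : V}
    (hμ : μ ∈ K) (hν : ν ∈ K) (hμ' : μ' ∈ K) (hν' : ν' ∈ K) {t s : ℝ} (ht : 0 < t) (hs : 0 < s)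
    (h : t • (μ - ν) = s • (μ' - ν')) : t * ρ μ ν = s * ρ μ' ν' := by
  wlog hts : t ≤ s generalizing μ ν μ' ν' t s
  · exact (this hμ' hν' hμ hν hs ht h.symm (le_of_not_ge hts)).symm
  have hr : t / s ∈ Icc (0 : ℝ) 1 := ⟨by positivity, (div_le_one hs).2 hts⟩
  have hdiff : μ' - ν' = (t / s) • (μ - ν) := by
    rw [div_eq_inv_mul, mul_smul, h, inv_smul_smul₀ hs.ne']
  rw [hconv.dist_eq_mul_of_sub_eq_smul hbal hρ hK hμ' hν' hμ hν hr hdiff]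
  field_simp

theorem exists_isHomogeneousExtension (hconv : IsConvexMetric K ρ)
    (hbal : IsMidpointBalanced K ρ) (hρ : IsMetricOn K ρ) (hK : Convex ℝ K) :
    ∃ M, IsHomogeneousExtension K ρ M := by
  have : ∀ x : Submodule.span ℝ (K - K), ∃ m : ℝ, ∀ t > (0 : ℝ), ∀ μ ∈ K, ∀ ν ∈ K,
      (x : V) = t • (μ - ν) → m = t * ρ μ ν := by
    intro x
    by_cases hx : ∃ t > (0 : ℝ), ∃ μ ∈ K, ∃ ν ∈ K, (x : V) = t • (μ - ν)
    · obtain ⟨t, ht, μ, hμ, ν, hν, hx⟩ := hx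
      exact ⟨t * ρ μ ν, fun s hs μ' hμ' ν' hν' hx' =>
        hconv.mul_dist_eq_of_smul_sub_eq hbal hρ hK hμ hν hμ' hν' ht hs (hx ▸ hx')⟩
    · exact ⟨0, fun t ht μ hμ ν hν hx' => absurd ⟨t, ht, μ, hμ, ν, hν, hx'⟩ hx⟩
  choose M hM using this
  exact ⟨M, hM⟩

theorem IsHomogeneousExtension.isInducedBy (hM : IsHomogeneousExtension K ρ M) :
    IsInducedBy K ρ M := by
  intro μ hμ ν hν
  rw [hM _ 1 one_pos μ hμ ν hν (one_smul ℝ _).symm, one_mul]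

theorem IsHomogeneousExtension.eq_zero_iff (hM : IsHomogeneousExtension K ρ M)
    (hρ : IsMetricOn K ρ) (hK : Convex ℝ K) (hne : K.Nonempty) (x : Submodule.span ℝ (K - K)) :
    M x = 0 ↔ x = 0 := by
  obtain ⟨t, ht, μ, hμ, ν, hν, hx⟩ := exists_pos_smul_sub_of_mem_span hK hne x.2
  rw [hM x t ht μ hμ ν hν hx, mul_eq_zero, or_iff_right ht.ne', hρ.1 μ hμ ν hν,
    ← Submodule.coe_eq_zero, hx, smul_eq_zero, or_iff_right ht.ne', sub_eq_zero]

theorem IsHomogeneousExtension.map_smul (hM : IsHomogeneousExtension K ρ M)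
    (hρ : IsMetricOn K ρ) (hK : Convex ℝ K) (hne : K.Nonempty) (c : ℝ)
    (x : Submodule.span ℝ (K - K)) : M (c • x) = |c| * M x := by
  obtain ⟨t, ht, μ, hμ, ν, hν, hx⟩ := exists_pos_smul_sub_of_mem_span hK hne x.2
  rw [hM x t ht μ hμ ν hν hx]
  rcases lt_trichotomy c 0 with hc | rfl | hc
  · have hcx : ((c • x : Submodule.span ℝ (K - K)) : V) = (-c * t) • (ν - μ) := by
      rw [Submodule.coe_smul, hx]; module
    rw [hM _ _ (mul_pos (neg_pos.2 hc) ht) ν hν μ hμ hcx, hρ.2.1 ν hν μ hμ, abs_of_neg hc,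
      mul_assoc]
  · rw [zero_smul, (hM.eq_zero_iff hρ hK hne 0).2 rfl, abs_zero, zero_mul]
  · rw [hM _ (c * t) (mul_pos hc ht) μ hμ ν hν (by rw [Submodule.coe_smul, hx, smul_smul]),
      abs_of_pos hc, mul_assoc]

theorem IsHomogeneousExtension.add_le (hM : IsHomogeneousExtension K ρ M)
    (hconv : IsConvexMetric K ρ) (hbal : IsMidpointBalanced K ρ) (hρ : IsMetricOn K ρ)
    (hK : Convex ℝ K) (hne : K.Nonempty) (x y : Submodule.span ℝ (K - K)) :
    M (x + y) ≤ M x + M y := by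
  obtain ⟨t, ht, μ, hμ, ν, hν, hx⟩ := exists_pos_smul_sub_of_mem_span hK hne x.2
  obtain ⟨s, hs, μ', hμ', ν', hν', hy⟩ := exists_pos_smul_sub_of_mem_span hK hne y.2
  have hts : 0 < t + s := add_pos ht hs
  set l := t / (t + s) with hl_def
  have hl : l ∈ Icc (0 : ℝ) 1 :=
    ⟨by positivity, (div_le_one hts).2 (le_add_of_nonneg_right hs.le)⟩
  have hl' : 1 - l ∈ Icc (0 : ℝ) 1 := ⟨sub_nonneg.2 hl.2, sub_le_self 1 hl.1⟩
  have combo : ∀ {a b}, a ∈ K → b ∈ K → l • a + (1 - l) • b ∈ K := fun ha hb =>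
    hK ha hb hl.1 hl'.1 (add_sub_cancel l 1)
  have hxy : ((x + y : Submodule.span ℝ (K - K)) : V) =
      (t + s) • ((l • μ + (1 - l) • μ') - (l • ν + (1 - l) • ν')) := by
    rw [Submodule.coe_add, hx, hy, hl_def]
    match_scalars <;> field_simp <;> ring
  have hfirst := hconv.dist_eq_mul_of_sub_eq_smul hbal hρ hK (combo hμ hμ') (combo hν hμ')
    hμ hν hl (by module)
  have hsecond := hconv.dist_eq_mul_of_sub_eq_smul hbal hρ hK (combo hν hμ') (combo hν hν')
    hμ' hν' hl' (by module)
  rw [hM _ _ hts _ (combo hμ hμ') _ (combo hν hν') hxy, hM x t ht μ hμ ν hν hx,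
    hM y s hs μ' hμ' ν' hν' hy]
  calc (t + s) * ρ (l • μ + (1 - l) • μ') (l • ν + (1 - l) • ν')
      ≤ (t + s) * (l * ρ μ ν + (1 - l) * ρ μ' ν') := by
        rw [← hfirst, ← hsecond]
        exact mul_le_mul_of_nonneg_left (hρ.2.2 _ (combo hμ hμ') _ (combo hν hμ') _
          (combo hν hν')) hts.le
    _ = t * ρ μ ν + s * ρ μ' ν' := by
        rw [hl_def]; field_simp; ring

theorem IsHomogeneousExtension.isNormOn (hM : IsHomogeneousExtension K ρ M)
    (hconv : IsConvexMetric K ρ) (hbal : IsMidpointBalanced K ρ) (hρ : IsMetricOn K ρ)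
    (hK : Convex ℝ K) (hne : K.Nonempty) : IsNormOn _ M :=
  ⟨hM.eq_zero_iff hρ hK hne, hM.add_le hconv hbal hρ hK hne, hM.map_smul hρ hK hne⟩

theorem exists_isNormOn_isInducedBy (hconv : IsConvexMetric K ρ)
    (hbal : IsMidpointBalanced K ρ) (hρ : IsMetricOn K ρ) (hK : Convex ℝ K) :
    ∃ M, IsNormOn _ M ∧ IsInducedBy K ρ M := by
  rcases K.eq_empty_or_nonempty with rfl | hne
  · refine ⟨0, ⟨fun x => ?_, fun _ _ => by simp, fun _ _ => by simp⟩,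
      fun μ hμ => absurd hμ (notMem_empty μ)⟩
    simp [eq_zero_of_mem_span_empty_sub x]
  obtain ⟨M, hM⟩ := exists_isHomogeneousExtension hconv hbal hρ hK
  exact ⟨M, hM.isNormOn hconv hbal hρ hK hne, hM.isInducedBy⟩

end

/-- Let `K` be convex in `V`, `V⁰ = ℝ(K - K)`, and `ρ` a metric on `K`.
There is a norm `M` on `V⁰` with `ρ(μ,ν) = M(μ - ν)` iff `ρ` is convex, midpoint
balanced, and midpoint concave; moreover such `M` is unique. -/
theorem stmt_19 {V : Type*} [AddCommGroup V] [Module ℝ V] (K : Set V)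
    (hK : Convex ℝ K) (ρ : V → V → ℝ) (hρ : IsMetricOn K ρ) :
    ((∃ M : Submodule.span ℝ (K - K) → ℝ, IsNormOn (Submodule.span ℝ (K - K)) M ∧
        ∀ μ, ∀ hμ : μ ∈ K, ∀ ν, ∀ hν : ν ∈ K,
          ρ μ ν = M ⟨μ - ν, Submodule.subset_span (Set.sub_mem_sub hμ hν)⟩) ↔
      ((∀ μ ∈ K, ∀ ν₁ ∈ K, ∀ ν₂ ∈ K, ∀ t ∈ Set.Icc (0 : ℝ) 1,
          ρ μ (t • ν₁ + (1 - t) • ν₂) ≤ t * ρ μ ν₁ + (1 - t) * ρ μ ν₂) ∧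
        (∀ μ ∈ K, ∀ ν ∈ K, ∀ μ' ∈ K, ∀ ν' ∈ K,
          (2 : ℝ)⁻¹ • (μ + ν') = (2 : ℝ)⁻¹ • (μ' + ν) → ρ μ ν = ρ μ' ν') ∧
        (∀ μ ∈ K, ∀ ν ∈ K, ∀ μ' ∈ K, ∀ ν' ∈ K,
          ρ ((2 : ℝ)⁻¹ • (μ + μ')) ((2 : ℝ)⁻¹ • (ν + ν')) ≤
            (ρ μ ν + ρ μ' ν') / 2))) ∧
    (∀ M M' : Submodule.span ℝ (K - K) → ℝ,
      IsNormOn (Submodule.span ℝ (K - K)) M → IsNormOn (Submodule.span ℝ (K - K)) M' →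
      (∀ μ, ∀ hμ : μ ∈ K, ∀ ν, ∀ hν : ν ∈ K,
        ρ μ ν = M ⟨μ - ν, Submodule.subset_span (Set.sub_mem_sub hμ hν)⟩) →
      (∀ μ, ∀ hμ : μ ∈ K, ∀ ν, ∀ hν : ν ∈ K,
        ρ μ ν = M' ⟨μ - ν, Submodule.subset_span (Set.sub_mem_sub hμ hν)⟩) →
      M = M') := by
  refine ⟨⟨fun ⟨M, hM, hMρ⟩ => ?_, fun ⟨hconv, hbal, _⟩ => ?_⟩,
    fun M M' hM hM' hMρ hM'ρ => hM.eq_of_isInducedBy hK hM' hMρ hM'ρ⟩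
  · exact ⟨IsInducedBy.isConvexMetric hMρ hK hM, IsInducedBy.isMidpointBalanced hMρ,
      IsInducedBy.isMidpointConcave hMρ hK hM⟩
  · exact exists_isNormOn_isInducedBy hconv hbal hρ hK
end
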